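/- arXiv:1303.2418 — 5 statements merged into one kernel-verified Lean document; each statement's English description precedes it below -/
import Mathlib

section
/- Isometry of the Bloch direct-integral transform: let U : ℝ × ℝ → ℂⁿ be continuous, 2π-periodic in its second argument, and vanishing for σ outside [−1/2,1/2] in its first argument, and define (ℬU)(x) = ∫_{−1/2}^{1/2} e^{iσx} U(σ,x) dσ for x ∈ ℝ. Then ℬU ∈ L²(ℝ,ℂⁿ) and ∫_ℝ |(ℬU)(x)|² dx = ∫_{−1/2}^{1/2} ∫_{−π}^{π} |U(σ,x)|² dx dσ. -/
/-!
For fixed `y`, the values of `ℬU` along the orbit `y + 2πℤ` are, by the periodicity of `U` in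
its second variable, the Fourier coefficients on `[-1/2, 1/2]` of `σ ↦ e^{iσy} U(σ, y)`.
Parseval's identity therefore gives `∑ₖ |ℬU(y + 2πk)|² = ∫ |U(σ, y)|² dσ`, and integrating this
over the fundamental domain `(-π, π]` of `2πℤ` (followed by Fubini) yields the isometry.
-/

open Real MeasureTheory Set
open scoped ENNReal

theorem hasSum_sq_norm_fourierCoeffOn_euclidean {ι : Type*} [Fintype ι] {a b : ℝ}
    {f : ℝ → EuclideanSpace ℂ ι} (hab : a < b) (hf : MemLp f 2 (volume.restrict (Ioc a b))) :
    HasSum (fun n => ‖fourierCoeffOn hab f n‖ ^ 2) ((b - a)⁻¹ • ∫ x in a..b, ‖f x‖ ^ 2) := by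
  have hcoord (j : ι) : MemLp (fun x => f x j) 2 (volume.restrict (Ioc a b)) :=
    (EuclideanSpace.proj (𝕜 := ℂ) j : EuclideanSpace ℂ ι →L[ℂ] ℂ).comp_memLp' hf
  have hcoeff (n : ℤ) (j : ι) :
      fourierCoeffOn hab f n j = fourierCoeffOn hab (fun x => f x j) n := by
    have hfint : IntervalIntegrable f volume a b :=
      (intervalIntegrable_iff_integrableOn_Ioc_of_le hab.le).2 (hf.integrable one_le_two)
    simp only [fourierCoeffOn_eq_integral, PiLp.smul_apply]
    congr 1
    refine ((EuclideanSpace.proj j : EuclideanSpace ℂ ι →L[ℂ] ℂ).intervalIntegral_comp_comm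
      (hfint.continuousOn_smul ?_)).symm
    exact ((fourier (-n)).continuous.comp (AddCircle.continuous_mk' _)).continuousOn
  have hsum := hasSum_sum fun j (_ : j ∈ Finset.univ) => hasSum_sq_fourierCoeffOn hab (hcoord j)
  simp only [← hcoeff, ← EuclideanSpace.norm_sq_eq, ← Finset.smul_sum] at hsum
  convert hsum using 2
  rw [← intervalIntegral.integral_finsetSum fun j _ =>
    (intervalIntegrable_iff_integrableOn_Ioc_of_le hab.le).2
      ((hcoord j).integrable_norm_pow two_ne_zero)]
  simp only [EuclideanSpace.norm_sq_eq]

theorem lintegral_eq_setLIntegral_tsum_zsmul_add {T : ℝ} (hT : 0 < T) (a : ℝ) {f : ℝ → ℝ≥0∞}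
    (hf : Measurable f) :
    ∫⁻ x, f x = ∫⁻ y in Ioc a (a + T), ∑' k : ℤ, f (k • T + y) := by
  have hfund : IsAddFundamentalDomain (AddSubgroup.zmultiples T) (Ioc a (a + T)) :=
    isAddFundamentalDomain_Ioc hT a
  rw [hfund.lintegral_eq_tsum'' f, lintegral_tsum (f := fun (k : ℤ) y => f (k • T + y))
    fun k => (hf.comp (measurable_const_add _)).aemeasurable]
  exact tsum_range (fun g : ℝ => ∫⁻ y in Ioc a (a + T), f (g + y)) (smul_left_injective ℤ hT.ne')

theorem integrable_and_integral_eq_of_hasSum_zsmul_add {T : ℝ} (hT : 0 < T) (a : ℝ)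
    {φ W : ℝ → ℝ} (hφ : Measurable φ) (hφ_nonneg : ∀ x, 0 ≤ φ x)
    (hW : IntegrableOn W (Ioc a (a + T)))
    (hsum : ∀ y, HasSum (fun k : ℤ => φ (k • T + y)) (W y)) :
    Integrable φ ∧ ∫ x, φ x = ∫ y in a..a + T, W y := by
  have hW_nonneg (y : ℝ) : 0 ≤ W y := (hsum y).nonneg fun k => hφ_nonneg _
  have hlintegral :
      ∫⁻ x, ENNReal.ofReal (φ x) = ENNReal.ofReal (∫ y in Ioc a (a + T), W y) := by
    rw [lintegral_eq_setLIntegral_tsum_zsmul_add hT a hφ.ennreal_ofReal,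
      ofReal_integral_eq_lintegral_ofReal hW (ae_of_all _ hW_nonneg)]
    refine lintegral_congr fun y => ?_
    rw [← ENNReal.ofReal_tsum_of_nonneg (fun k => hφ_nonneg _) (hsum y).summable,
      (hsum y).tsum_eq]
  refine ⟨⟨hφ.aestronglyMeasurable, ?_⟩, ?_⟩
  · rw [hasFiniteIntegral_iff_ofReal (ae_of_all _ hφ_nonneg), hlintegral]
    exact ENNReal.ofReal_lt_top
  · rw [integral_eq_lintegral_of_nonneg_ae (ae_of_all _ hφ_nonneg) hφ.aestronglyMeasurable,
      hlintegral, ENNReal.toReal_ofReal (setIntegral_nonneg measurableSet_Ioc fun y _ =>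
        hW_nonneg y), intervalIntegral.integral_of_le (by linarith)]

section BlochTransform

variable {E : Type*} [NormedAddCommGroup E] [NormedSpace ℂ E]

noncomputable def blochTransform (U : ℝ → ℝ → E) (x : ℝ) : E :=
  ∫ σ in (-(1:ℝ)/2)..(1/2), Complex.exp (Complex.I * σ * x) • U σ x

theorem continuous_blochTransform {U : ℝ → ℝ → E} (hU : Continuous (Function.uncurry U)) :
    Continuous (blochTransform U) :=
  intervalIntegral.continuous_parametric_intervalIntegral_of_continuous' (by fun_prop) _ _

theorem blochTransform_zsmul_add_eq_fourierCoeffOn {U : ℝ → ℝ → E}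
    (hper : ∀ σ, Function.Periodic (U σ) (2 * π)) (hab : -(1:ℝ)/2 < 1/2) (y : ℝ) (k : ℤ) :
    blochTransform U (k • (2 * π) + y) =
      fourierCoeffOn hab (fun σ => Complex.exp (Complex.I * σ * y) • U σ y) (-k) := by
  rw [fourierCoeffOn_eq_integral, blochTransform, show (1:ℝ)/2 - -1/2 = 1 by norm_num, div_one,
    one_smul]
  refine intervalIntegral.integral_congr fun σ _ => ?_
  rw [add_comm, (hper σ).zsmul k y, fourier_coe_apply, smul_smul, ← Complex.exp_add]
  congr 2
  push_cast
  ring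

end BlochTransform

theorem hasSum_sq_norm_blochTransform_zsmul_add {ι : Type*} [Fintype ι]
    {U : ℝ → ℝ → EuclideanSpace ℂ ι} (hper : ∀ σ, Function.Periodic (U σ) (2 * π)) (y : ℝ)
    (hy : MemLp (fun σ => U σ y) 2 (volume.restrict (Ioc (-(1:ℝ)/2) (1/2)))) :
    HasSum (fun k : ℤ => ‖blochTransform U (k • (2 * π) + y)‖ ^ 2)
      (∫ σ in (-(1:ℝ)/2)..(1/2), ‖U σ y‖ ^ 2) := by
  have hab : -(1:ℝ)/2 < 1/2 := by norm_num
  set g : ℝ → EuclideanSpace ℂ ι := fun σ => Complex.exp (Complex.I * σ * y) • U σ y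
  have hnorm (σ : ℝ) : ‖g σ‖ = ‖U σ y‖ := by
    rw [norm_smul, show Complex.I * σ * y = ((σ * y : ℝ) : ℂ) * Complex.I by push_cast; ring,
      Complex.norm_exp_ofReal_mul_I, one_mul]
  have hg : MemLp g 2 (volume.restrict (Ioc (-(1:ℝ)/2) (1/2))) :=
    hy.congr_norm ((by fun_prop : Continuous fun σ : ℝ => Complex.exp (Complex.I * σ * y))
      |>.aestronglyMeasurable.smul hy.1) (ae_of_all _ fun σ => (hnorm σ).symm)
  have H := (Equiv.neg ℤ).hasSum_iff.mpr (hasSum_sq_norm_fourierCoeffOn_euclidean hab hg)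
  simp only [hnorm, show (1:ℝ)/2 - -1/2 = 1 by norm_num, inv_one, one_smul] at H
  exact H.congr_fun fun k =>
    congrArg (‖·‖ ^ 2) (blochTransform_zsmul_add_eq_fourierCoeffOn hper hab y k)

theorem bloch_direct_integral_isometry_general
    (n : ℕ) (U : ℝ → ℝ → EuclideanSpace ℂ (Fin n))
    (hcont : Continuous (Function.uncurry U))
    (hper : ∀ σ x : ℝ, U σ (x + 2 * π) = U σ x) :
    MemLp (fun x : ℝ =>
        ∫ σ in (-(1:ℝ)/2)..(1/2), Complex.exp (Complex.I * σ * x) • U σ x) 2 volume ∧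
    (∫ x : ℝ, ‖∫ σ in (-(1:ℝ)/2)..(1/2), Complex.exp (Complex.I * σ * x) • U σ x‖ ^ 2)
      = ∫ σ in (-(1:ℝ)/2)..(1/2), ∫ x in (-π)..π, ‖U σ x‖ ^ 2 := by
  change MemLp (blochTransform U) 2 volume ∧ ∫ x, ‖blochTransform U x‖ ^ 2 = _
  have hF := continuous_blochTransform hcont
  have hUy (y : ℝ) : Continuous fun σ => U σ y := by fun_prop
  have hfiber (y : ℝ) := hasSum_sq_norm_blochTransform_zsmul_add hper y
    ((memLp_two_iff_integrable_sq_norm (hUy y).aestronglyMeasurable).2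
      ((hUy y).norm.pow 2).integrableOn_Ioc)
  have hW : Continuous fun y => ∫ σ in (-(1:ℝ)/2)..(1/2), ‖U σ y‖ ^ 2 :=
    intervalIntegral.continuous_parametric_intervalIntegral_of_continuous' (by fun_prop) _ _
  obtain ⟨hint, heq⟩ := integrable_and_integral_eq_of_hasSum_zsmul_add two_pi_pos (-π)
    (φ := fun x => ‖blochTransform U x‖ ^ 2) (hF.norm.pow 2).measurable (fun x => by positivity)
    hW.integrableOn_Ioc hfiber
  refine ⟨(memLp_two_iff_integrable_sq_norm hF.aestronglyMeasurable).2 hint, ?_⟩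
  rw [heq, show -π + 2 * π = π by ring]
  have hUsq : Continuous fun p : ℝ × ℝ => ‖U p.2 p.1‖ ^ 2 := by fun_prop
  exact intervalIntegral_intervalIntegral_swap <|
    (hUsq.continuousOn.integrableOn_compact (isCompact_uIcc.prod isCompact_uIcc)).mono_set
      (prod_mono uIoc_subset_uIcc uIoc_subset_uIcc)

/-- Isometry of the Bloch direct-integral transform. -/
theorem bloch_direct_integral_isometry
    (n : ℕ) (U : ℝ → ℝ → EuclideanSpace ℂ (Fin n))
    (hcont : Continuous (Function.uncurry U))
    (hper : ∀ σ x : ℝ, U σ (x + 2 * π) = U σ x)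
    (hsupp : ∀ σ : ℝ, σ ∉ Set.Icc (-(1:ℝ)/2) (1/2) → U σ = 0) :
    MemLp (fun x : ℝ =>
        ∫ σ in (-(1:ℝ)/2)..(1/2), Complex.exp (Complex.I * σ * x) • U σ x) 2 volume ∧
    (∫ x : ℝ, ‖∫ σ in (-(1:ℝ)/2)..(1/2), Complex.exp (Complex.I * σ * x) • U σ x‖ ^ 2)
      = ∫ σ in (-(1:ℝ)/2)..(1/2), ∫ x in (-π)..π, ‖U σ x‖ ^ 2 :=
  bloch_direct_integral_isometry_general n U hcont hper
end

section
/- Rapid decay of eigenvectors of the Bloch operator in discrete Fourier variables: let D = diag(d₁,…,dₙ) with dᵢ > 0, σ ∈ ℝ, λ ∈ ℂ, and let h : ℤ → M_n(ℂ) satisfy sup_{k∈ℤ} (1+|k|)^m ‖h_k‖ < ∞ for every m ∈ ℕ. Suppose w : ℤ → ℂⁿ is bounded and satisfies, for every ℓ ∈ ℤ, −(σ+ℓ)² D w_ℓ + Σ_{k∈ℤ} h_{ℓ−k} w_k = λ w_ℓ (the series converging absolutely). Then sup_{ℓ∈ℤ} (1+|ℓ|)^m |w_ℓ| < ∞ for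 every m ∈ ℕ; in particular w ∈ (ℓ^q(ℤ))ⁿ for every q ∈ [1,∞]. -/
/-!
Bootstrap on the order of decay. Put `S ℓ = ∑ₖ h (ℓ - k) (w k)`; the equation says
`S ℓ = (λ + (σ + ℓ)² D) w ℓ`, and every entry `λ + (σ + ℓ)² dᵢ` of this diagonal symbol has
modulus at least `1 + |ℓ|` for all but finitely many `ℓ`, so `(1 + |ℓ|) |w ℓ| ≤ |S ℓ|` there.
Convolution with the rapidly decaying `h` preserves decay `O((1 + |ℓ|)⁻ᵐ)`, hence decay of
order `m` of `w` passes to `S` and then upgrades to order `m + 1` for `w`, starting from the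
boundedness of `w`. Decay of order `2` already puts `w` in `ℓ¹ ⊆ ℓ^q`.
-/

open scoped ENNReal
open Filter

def PolyDecay {E : Type*} [Norm E] (m : ℕ) (f : ℤ → E) : Prop :=
  ∃ C : ℝ, ∀ k : ℤ, (1 + |(k : ℝ)|) ^ m * ‖f k‖ ≤ C

lemma one_add_abs_le_mul_one_add_abs_sub (x y : ℝ) :
    1 + |x| ≤ (1 + |x - y|) * (1 + |y|) := by
  have := abs_sub_abs_le_abs_sub x y
  nlinarith [abs_nonneg (x - y), abs_nonneg y]

lemma summable_inv_one_add_abs_sq : Summable fun j : ℤ => ((1 + |(j : ℝ)|) ^ 2)⁻¹ := by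
  have hnat : Summable fun n : ℕ => ((1 + (n : ℝ)) ^ 2)⁻¹ :=
    ((summable_nat_add_iff 1).mpr (Real.summable_nat_pow_inv.mpr one_lt_two)).congr fun n => by
      push_cast; ring_nf
  exact .of_nat_of_neg (hnat.congr fun n => by simp) (hnat.congr fun n => by simp)

lemma EuclideanSpace.mul_norm_le_norm_of_forall {𝕜 ι : Type*} [RCLike 𝕜] [Fintype ι]
    {x y : EuclideanSpace 𝕜 ι} {t : ℝ} (ht : 0 ≤ t) (hxy : ∀ i, t * ‖x i‖ ≤ ‖y i‖) :
    t * ‖x‖ ≤ ‖y‖ := by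
  rw [EuclideanSpace.norm_eq, EuclideanSpace.norm_eq, ← Real.sqrt_sq ht,
    ← Real.sqrt_mul (sq_nonneg t), Finset.mul_sum]
  gcongr with i
  rw [← mul_pow]
  exact pow_le_pow_left₀ (by positivity) (hxy i) 2

lemma eventually_one_add_abs_le_norm_add_sq_mul (z : ℂ) (s : ℝ) {a : ℝ} (ha : 0 < a) :
    ∀ᶠ x : ℝ in cocompact ℝ, 1 + |x| ≤ ‖z + (((s + x) ^ 2 * a : ℝ) : ℂ)‖ := by
  set T := (2 + |s| + ‖z‖) / a
  filter_upwards [tendsto_norm_cocompact_atTop.eventually_ge_atTop (|s| + 1 + T)] with x hx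
  rw [Real.norm_eq_abs] at hx
  set u := |s + x|
  have hxu : |x| ≤ u + |s| := by simpa [add_comm] using abs_sub_abs_le_abs_add x s
  have hT : 0 ≤ T := by positivity
  have hTu : 1 + T ≤ u := by linarith
  have hau : 2 + |s| + ‖z‖ ≤ a * u := by
    have haT : a * T = 2 + |s| + ‖z‖ := mul_div_cancel₀ _ ha.ne'
    nlinarith [mul_le_mul_of_nonneg_left hTu ha.le]
  have hreal : (s + x) ^ 2 * a - ‖z‖ ≤ ‖z + (((s + x) ^ 2 * a : ℝ) : ℂ)‖ := by
    have := norm_sub_le (z + (((s + x) ^ 2 * a : ℝ) : ℂ)) z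
    rw [add_sub_cancel_left, Complex.norm_real, Real.norm_eq_abs,
      abs_of_nonneg (by positivity)] at this
    linarith
  calc 1 + |x| ≤ u * (2 + |s| + ‖z‖) - ‖z‖ := by
        nlinarith [mul_nonneg (by linarith : 0 ≤ u - 1) (by positivity : 0 ≤ 1 + |s| + ‖z‖)]
    _ ≤ u * (a * u) - ‖z‖ := by gcongr
    _ = (s + x) ^ 2 * a - ‖z‖ := by rw [← sq_abs (s + x)]; ring
    _ ≤ _ := hreal

namespace PolyDecay

variable {E F : Type*}

lemma zero_of_bounded [Norm E] {f : ℤ → E} (hf : ∃ M : ℝ, ∀ k, ‖f k‖ ≤ M) :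
    PolyDecay 0 f := by
  simpa [PolyDecay] using hf

lemma succ_of_eventually_le [Norm E] [Norm F] {m : ℕ} {f : ℤ → E} {g : ℤ → F}
    (hg : PolyDecay m g) (hfg : ∀ᶠ ℓ : ℤ in cofinite, (1 + |(ℓ : ℝ)|) * ‖f ℓ‖ ≤ ‖g ℓ‖) :
    PolyDecay (m + 1) f := by
  obtain ⟨C, hC⟩ := hg
  obtain ⟨C', hC'⟩ := ((eventually_cofinite.mp hfg).image
    fun ℓ : ℤ => (1 + |(ℓ : ℝ)|) ^ (m + 1) * ‖f ℓ‖).bddAbove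
  refine ⟨max C C', fun ℓ => ?_⟩
  by_cases hℓ : (1 + |(ℓ : ℝ)|) * ‖f ℓ‖ ≤ ‖g ℓ‖
  · calc (1 + |(ℓ : ℝ)|) ^ (m + 1) * ‖f ℓ‖
          = (1 + |(ℓ : ℝ)|) ^ m * ((1 + |(ℓ : ℝ)|) * ‖f ℓ‖) := by ring
      _ ≤ (1 + |(ℓ : ℝ)|) ^ m * ‖g ℓ‖ := by gcongr
      _ ≤ max C C' := (hC ℓ).trans (le_max_left _ _)
  · exact (hC' ⟨ℓ, hℓ, rfl⟩).trans (le_max_right _ _)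

lemma memℓp [NormedAddCommGroup E] {f : ℤ → E} (hf : PolyDecay 2 f) {p : ℝ≥0∞} (hp : 1 ≤ p) :
    Memℓp f p := by
  obtain ⟨C, hC⟩ := hf
  have hsum : Summable fun k => ‖f k‖ := by
    refine .of_nonneg_of_le (fun k => norm_nonneg _) (fun k => ?_)
      (summable_inv_one_add_abs_sq.mul_left C)
    rw [← div_eq_mul_inv, le_div_iff₀ (by positivity), mul_comm]
    exact hC k
  exact (memℓp_gen (by simpa using hsum) : Memℓp f 1).of_exponent_ge hp

variable {𝕜 : Type*} [NontriviallyNormedField 𝕜] [NormedAddCommGroup E] [NormedSpace 𝕜 E]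
  [NormedAddCommGroup F] [NormedSpace 𝕜 F]

/-- By Peetre's inequality the weight `(1 + |ℓ|)ᵐ` splits between the two factors; the two
extra orders of decay of `a` make the sum over `k` converge. -/
lemma tsum_apply_sub {m : ℕ} {a : ℤ → E →L[𝕜] F} {w : ℤ → E} (ha : PolyDecay (m + 2) a)
    (hw : PolyDecay m w) : PolyDecay m fun ℓ => ∑' k, a (ℓ - k) (w k) := by
  obtain ⟨A, hA⟩ := ha
  obtain ⟨C, hC⟩ := hw
  have hA0 : 0 ≤ A := (by positivity : (0 : ℝ) ≤ _).trans (hA 0)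
  set B := ∑' j : ℤ, ((1 + |(j : ℝ)|) ^ 2)⁻¹
  refine ⟨A * C * B, fun ℓ => ?_⟩
  have hterm : ∀ k, ‖a (ℓ - k) (w k)‖ ≤
      A * C / (1 + |(ℓ : ℝ)|) ^ m * ((1 + |((ℓ - k : ℤ) : ℝ)|) ^ 2)⁻¹ := by
    intro k
    have hpeetre := one_add_abs_le_mul_one_add_abs_sub (ℓ : ℝ) k
    have hweighted : (1 + |(ℓ : ℝ)|) ^ m * (1 + |((ℓ - k : ℤ) : ℝ)|) ^ 2
        * ‖a (ℓ - k) (w k)‖ ≤ A * C :=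
      calc _ ≤ ((1 + |((ℓ - k : ℤ) : ℝ)|) * (1 + |(k : ℝ)|)) ^ m
            * (1 + |((ℓ - k : ℤ) : ℝ)|) ^ 2 * (‖a (ℓ - k)‖ * ‖w k‖) := by
            push_cast
            gcongr
            exact (a (ℓ - k)).le_opNorm (w k)
        _ = ((1 + |((ℓ - k : ℤ) : ℝ)|) ^ (m + 2) * ‖a (ℓ - k)‖)
            * ((1 + |(k : ℝ)|) ^ m * ‖w k‖) := by
            rw [mul_pow]; ring
        _ ≤ A * C := mul_le_mul (hA _) (hC k) (by positivity) hA0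
    rw [div_mul_eq_mul_div, ← div_eq_mul_inv, div_div, le_div_iff₀ (by positivity)]
    linarith
  have hsum : HasSum
      (fun k : ℤ => A * C / (1 + |(ℓ : ℝ)|) ^ m * ((1 + |((ℓ - k : ℤ) : ℝ)|) ^ 2)⁻¹)
      (A * C / (1 + |(ℓ : ℝ)|) ^ m * B) :=
    ((Equiv.subLeft ℓ).hasSum_iff.mpr summable_inv_one_add_abs_sq.hasSum).mul_left _
  have hnorm := tsum_of_norm_bounded hsum hterm
  rw [div_mul_eq_mul_div, le_div_iff₀ (by positivity)] at hnorm
  linarith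

end PolyDecay

theorem rapid_decay_bloch_eigenvectors_general
    (n : ℕ) (d : Fin n → ℝ) (hd : ∀ i, 0 < d i) (σ : ℝ) (lam : ℂ)
    (h : ℤ → EuclideanSpace ℂ (Fin n) →L[ℂ] EuclideanSpace ℂ (Fin n))
    (hdecay : ∀ m : ℕ, ∃ C : ℝ, ∀ k : ℤ, (1 + |(k : ℝ)|) ^ m * ‖h k‖ ≤ C)
    (w : ℤ → EuclideanSpace ℂ (Fin n))
    (hbdd : ∃ M : ℝ, ∀ ℓ : ℤ, ‖w ℓ‖ ≤ M)
    (heq : ∀ (ℓ : ℤ) (i : Fin n),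
      -(((σ : ℂ) + (ℓ : ℂ)) ^ 2) * (d i : ℂ) * w ℓ i
          + (∑' k : ℤ, h (ℓ - k) (w k)) i = lam * w ℓ i) :
    (∀ m : ℕ, ∃ C : ℝ, ∀ ℓ : ℤ, (1 + |(ℓ : ℝ)|) ^ m * ‖w ℓ‖ ≤ C) ∧
    (∀ qexp : ℝ≥0∞, 1 ≤ qexp → Memℓp w qexp) := by
  set S := fun ℓ : ℤ => ∑' k : ℤ, h (ℓ - k) (w k)
  have hsymbol : ∀ ℓ : ℤ, ∀ i, S ℓ i = (lam + (((σ + ℓ) ^ 2 * d i : ℝ) : ℂ)) * w ℓ i := by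
    intro ℓ i
    push_cast
    linear_combination heq ℓ i
  have helliptic : ∀ᶠ ℓ : ℤ in cofinite, (1 + |(ℓ : ℝ)|) * ‖w ℓ‖ ≤ ‖S ℓ‖ := by
    filter_upwards [eventually_all.mpr fun i => Int.tendsto_coe_cofinite.eventually
      (eventually_one_add_abs_le_norm_add_sq_mul lam σ (hd i))] with ℓ hℓ
    refine EuclideanSpace.mul_norm_le_norm_of_forall (by positivity) fun i => ?_
    rw [hsymbol, norm_mul]
    exact mul_le_mul_of_nonneg_right (hℓ i) (norm_nonneg _)
  have hw : ∀ m, PolyDecay m w := by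
    intro m
    induction m with
    | zero => exact PolyDecay.zero_of_bounded hbdd
    | succ m ih =>
      exact (PolyDecay.tsum_apply_sub (hdecay (m + 2)) ih).succ_of_eventually_le helliptic
  exact ⟨hw, fun q hq => (hw 2).memℓp hq⟩

/-- Rapid decay of eigenvectors of the Bloch operator in discrete
Fourier variables. The matrices `h k` act on `ℂⁿ` (with the Euclidean norm) and
`‖h k‖` is the operator norm. -/
theorem rapid_decay_bloch_eigenvectors
    (n : ℕ) (d : Fin n → ℝ) (hd : ∀ i, 0 < d i) (σ : ℝ) (lam : ℂ)
    (h : ℤ → EuclideanSpace ℂ (Fin n) →L[ℂ] EuclideanSpace ℂ (Fin n))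
    (hdecay : ∀ m : ℕ, ∃ C : ℝ, ∀ k : ℤ, (1 + |(k : ℝ)|) ^ m * ‖h k‖ ≤ C)
    (w : ℤ → EuclideanSpace ℂ (Fin n))
    (hbdd : ∃ M : ℝ, ∀ ℓ : ℤ, ‖w ℓ‖ ≤ M)
    (habs : ∀ ℓ : ℤ, Summable fun k : ℤ => ‖h (ℓ - k) (w k)‖)
    (heq : ∀ (ℓ : ℤ) (i : Fin n),
      -(((σ : ℂ) + (ℓ : ℂ)) ^ 2) * (d i : ℂ) * w ℓ i
          + (∑' k : ℤ, h (ℓ - k) (w k)) i = lam * w ℓ i) :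
    (∀ m : ℕ, ∃ C : ℝ, ∀ ℓ : ℤ, (1 + |(ℓ : ℝ)|) ^ m * ‖w ℓ‖ ≤ C) ∧
    (∀ qexp : ℝ≥0∞, 1 ≤ qexp → Memℓp w qexp) :=
  rapid_decay_bloch_eigenvectors_general n d hd σ lam h hdecay w hbdd heq
end

section
/- Expansion of the critical Bloch eigenvalue: suppose λ : (−σ₀,σ₀) → ℂ is smooth with λ(0) = 0, e : (−σ₀,σ₀) × ℝ → ℂⁿ is smooth, 2π-periodic in its second argument, with e(0,x) = u⋆′(x), and D(∂ₓ + iσ)² e(σ,·) + f′(u⋆) e(σ,·) = λ(σ) e(σ,·) holds for every σ ∈ (−σ₀,σ₀). Then λ′(0) = 0 and λ″(0) = 2 ∫_{−π}^{π} ( 2i ∂²e/∂σ∂x (0,x) − u⋆′(x) ) · D u_ad(x) dx; equivalently, λ(σ) = −dσ² + O(|σ|³) with d = −∫_{−π}^{π} ( 2i ∂²e/∂σ∂x (0,x) − u⋆′(x) ) · D u_ad(x) dx. -/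
open Real MeasureTheory

open intervalIntegral Metric Set Filter Topology


-- deriv of periodic function is periodic
lemma deriv_periodic {E : Type*} [NormedAddCommGroup E] [NormedSpace ℝ E]
    (g : ℝ → E) (c : ℝ) (h : ∀ x, g (x + c) = g x) (x : ℝ) :
    deriv g (x + c) = deriv g x := by
  rw [← deriv_comp_add_const g c x]
  congr 1
  funext y
  exact h y

-- even function has odd derivative
lemma deriv_even_odd (g : ℝ → ℝ) (h : ∀ x, g (-x) = g x) (x : ℝ) :
    deriv g (-x) = -deriv g x := by
  have := deriv_comp_neg g x
  rw [show (fun y => g (-y)) = g from funext h] at this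
  rw [this, neg_neg]

-- odd function has even derivative
lemma deriv_odd_even (g : ℝ → ℝ) (h : ∀ x, g (-x) = -g x) (x : ℝ) :
    deriv g (-x) = deriv g x := by
  have := deriv_comp_neg g x
  rw [show (fun y => g (-y)) = fun y => -g y from funext h, deriv.fun_neg] at this
  linarith

-- odd continuous-ish function integrates to zero over symmetric interval
lemma integral_odd_zero (g : ℝ → ℝ) (h : ∀ x, g (-x) = -g x) :
    (∫ x in (-π)..π, g x) = 0 := by
  have h1 : (∫ x in (-π)..π, g (-x)) = ∫ x in (-π)..π, g x := by
    simpa using intervalIntegral.integral_comp_neg (a := -π) (b := π) (f := g)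
  have h2 : (∫ x in (-π)..π, g (-x)) = -∫ x in (-π)..π, g x := by
    simp only [h]
    exact intervalIntegral.integral_neg
  linarith [h1.symm.trans h2]

lemma key_hasDerivAt_integral (σ₀ : ℝ) (hσ₀ : 0 < σ₀) (Φ : ℝ × ℝ → ℂ)
    (hΦ : ContDiffOn ℝ (⊤ : ℕ∞) Φ (Set.Ioo (-σ₀) σ₀ ×ˢ (Set.univ : Set ℝ))) :
    IntervalIntegrable (fun x => fderiv ℝ Φ (0, x) (1, 0)) volume (-π) π ∧
    HasDerivAt (fun σ => ∫ x in (-π)..π, Φ (σ, x))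
      (∫ x in (-π)..π, fderiv ℝ Φ (0, x) (1, 0)) 0 := by
  set U : Set (ℝ × ℝ) := Set.Ioo (-σ₀) σ₀ ×ˢ (Set.univ : Set ℝ) with hUdef
  have hU : IsOpen U := isOpen_Ioo.prod isOpen_univ
  have hmem : ∀ σ ∈ Set.Ioo (-σ₀) σ₀, ∀ x : ℝ, (σ, x) ∈ U := by
    intro σ hσ x; exact ⟨hσ, trivial⟩
  -- continuity of Φ at points of U
  have hcontAt : ∀ p ∈ U, ContinuousAt Φ p := fun p hp =>
    (hΦ.contDiffAt (hU.mem_nhds hp)).continuousAt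
  -- the partial derivative in the first variable
  have hpd : ∀ p ∈ U, HasDerivAt (fun σ => Φ (σ, p.2)) (fderiv ℝ Φ p (1, 0)) p.1 := by
    intro p hp
    have hdiff : DifferentiableAt ℝ Φ p :=
      (hΦ.contDiffAt (hU.mem_nhds hp)).differentiableAt (by simp)
    have hline : HasDerivAt (fun σ : ℝ => (σ, p.2)) ((1 : ℝ), (0 : ℝ)) p.1 :=
      (hasDerivAt_id p.1).prodMk (hasDerivAt_const p.1 p.2)
    exact (hdiff.hasFDerivAt.comp_hasDerivAt p.1 hline)
  -- continuity of the derivative on U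
  have hcontD : ContinuousOn (fun p => fderiv ℝ Φ p (1, 0)) U := by
    have h1 : ContDiffOn ℝ (⊤ : ℕ∞) (fderiv ℝ Φ) U :=
      hΦ.fderiv_of_isOpen hU (by exact_mod_cast le_top)
    have h2 : ContinuousOn (fderiv ℝ Φ) U := h1.continuousOn
    exact (ContinuousLinearMap.apply ℝ ℂ ((1 : ℝ), (0 : ℝ))).continuous.comp_continuousOn h2
  set ε : ℝ := σ₀ / 2 with hεdef
  have hε : 0 < ε := by positivity
  -- bound on the compact set
  have hcomp : IsCompact (Set.Icc (-ε) ε ×ˢ Set.Icc (-π) π) :=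
    (isCompact_Icc).prod isCompact_Icc
  have hsub : Set.Icc (-ε) ε ×ˢ Set.Icc (-π) π ⊆ U := by
    rintro ⟨s, t⟩ ⟨hs, _⟩
    refine ⟨⟨?_, ?_⟩, trivial⟩
    · nlinarith [hs.1]
    · nlinarith [hs.2]
  obtain ⟨M, hM⟩ := hcomp.exists_bound_of_continuousOn (hcontD.mono hsub)
  have hballS : ∀ σ ∈ ball (0 : ℝ) ε, σ ∈ Set.Ioo (-σ₀) σ₀ := by
    intro σ hσ
    rw [mem_ball, dist_zero_right, Real.norm_eq_abs] at hσ
    constructor <;> [nlinarith [abs_lt.mp hσ |>.1]; nlinarith [abs_lt.mp hσ |>.2]]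
  have hcont_slice : ∀ σ ∈ Set.Ioo (-σ₀) σ₀, Continuous (fun x => Φ (σ, x)) := by
    intro σ hσ
    rw [continuous_iff_continuousAt]
    intro x
    exact (hcontAt (σ, x) (hmem σ hσ x)).comp (Continuous.prodMk_right σ).continuousAt
  have h0mem : (0 : ℝ) ∈ Set.Ioo (-σ₀) σ₀ := ⟨by linarith, hσ₀⟩
  have key := intervalIntegral.hasDerivAt_integral_of_dominated_loc_of_deriv_le
    (F := fun σ x => Φ (σ, x)) (F' := fun σ x => fderiv ℝ Φ (σ, x) (1, 0))
    (x₀ := (0 : ℝ)) (a := -π) (b := π) (μ := volume) (bound := fun _ => M) (Metric.ball_mem_nhds _ hε)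
    ?_ ?_ ?_ ?_ ?_ ?_
  · exact ⟨key.1, key.2⟩
  · filter_upwards [isOpen_Ioo.mem_nhds h0mem] with σ hσ
    exact (hcont_slice σ hσ).aestronglyMeasurable
  · exact (hcont_slice 0 h0mem).intervalIntegrable _ _
  · have : Continuous fun x => fderiv ℝ Φ (0, x) (1, 0) := by
      rw [continuous_iff_continuousAt]
      intro x
      exact (hcontD.continuousAt (hU.mem_nhds (hmem 0 h0mem x))).comp
        (Continuous.prodMk_right (0:ℝ)).continuousAt
    exact this.aestronglyMeasurable.restrict
  · refine Filter.Eventually.of_forall fun t ht σ hσ => ?_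
    refine hM (σ, t) ⟨?_, ?_⟩
    · rw [mem_ball, dist_zero_right, Real.norm_eq_abs] at hσ
      exact Set.mem_Icc.2 ⟨by linarith [abs_lt.mp hσ |>.1], by linarith [abs_lt.mp hσ |>.2]⟩
    · have := Set.uIoc_of_le (by linarith [Real.pi_pos] : (-π : ℝ) ≤ π) ▸ ht
      exact Set.mem_Icc.2 ⟨le_of_lt (Set.mem_Ioc.mp this).1, (Set.mem_Ioc.mp this).2⟩
  · exact intervalIntegrable_const
  · refine Filter.Eventually.of_forall fun t ht σ hσ => ?_
    exact hpd (σ, t) (hmem σ (hballS σ hσ) t)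

lemma memU {σ₀ σ : ℝ} (hσ : σ ∈ Set.Ioo (-σ₀) σ₀) (x : ℝ) :
    ((σ, x) : ℝ × ℝ) ∈ Set.Ioo (-σ₀) σ₀ ×ˢ (Set.univ : Set ℝ) := ⟨hσ, trivial⟩

lemma partial1_hasDerivAt {σ₀ : ℝ} (Ψ : ℝ × ℝ → ℂ)
    (hΨ : ContDiffOn ℝ (⊤ : ℕ∞) Ψ (Set.Ioo (-σ₀) σ₀ ×ˢ (Set.univ : Set ℝ)))
    {σ : ℝ} (hσ : σ ∈ Set.Ioo (-σ₀) σ₀) (x : ℝ) :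
    HasDerivAt (fun s => Ψ (s, x)) (fderiv ℝ Ψ (σ, x) (1, 0)) σ := by
  have hU : IsOpen (Set.Ioo (-σ₀) σ₀ ×ˢ (Set.univ : Set ℝ)) := isOpen_Ioo.prod isOpen_univ
  have hdiff : DifferentiableAt ℝ Ψ (σ, x) :=
    (hΨ.contDiffAt (hU.mem_nhds (memU hσ x))).differentiableAt (by simp)
  exact hdiff.hasFDerivAt.comp_hasDerivAt σ ((hasDerivAt_id σ).prodMk (hasDerivAt_const σ x))

lemma partial2_hasDerivAt {σ₀ : ℝ} (Ψ : ℝ × ℝ → ℂ)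
    (hΨ : ContDiffOn ℝ (⊤ : ℕ∞) Ψ (Set.Ioo (-σ₀) σ₀ ×ˢ (Set.univ : Set ℝ)))
    {σ : ℝ} (hσ : σ ∈ Set.Ioo (-σ₀) σ₀) (x : ℝ) :
    HasDerivAt (fun y => Ψ (σ, y)) (fderiv ℝ Ψ (σ, x) (0, 1)) x := by
  have hU : IsOpen (Set.Ioo (-σ₀) σ₀ ×ˢ (Set.univ : Set ℝ)) := isOpen_Ioo.prod isOpen_univ
  have hdiff : DifferentiableAt ℝ Ψ (σ, x) :=
    (hΨ.contDiffAt (hU.mem_nhds (memU hσ x))).differentiableAt (by simp)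
  exact hdiff.hasFDerivAt.comp_hasDerivAt x ((hasDerivAt_const x σ).prodMk (hasDerivAt_id x))

lemma slice2_contDiff {σ₀ : ℝ} (Ψ : ℝ × ℝ → ℂ)
    (hΨ : ContDiffOn ℝ (⊤ : ℕ∞) Ψ (Set.Ioo (-σ₀) σ₀ ×ˢ (Set.univ : Set ℝ)))
    {σ : ℝ} (hσ : σ ∈ Set.Ioo (-σ₀) σ₀) :
    ContDiff ℝ (⊤ : ℕ∞) (fun y => Ψ (σ, y)) := by
  have hU : IsOpen (Set.Ioo (-σ₀) σ₀ ×ˢ (Set.univ : Set ℝ)) := isOpen_Ioo.prod isOpen_univ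
  rw [contDiff_iff_contDiffAt]
  intro x
  exact (hΨ.contDiffAt (hU.mem_nhds (memU hσ x))).comp x
    ((contDiff_const.prodMk contDiff_id).contDiffAt)

lemma fderiv_apply_contDiffOn {σ₀ : ℝ} (Ψ : ℝ × ℝ → ℂ)
    (hΨ : ContDiffOn ℝ (⊤ : ℕ∞) Ψ (Set.Ioo (-σ₀) σ₀ ×ˢ (Set.univ : Set ℝ))) (v : ℝ × ℝ) :
    ContDiffOn ℝ (⊤ : ℕ∞) (fun p => fderiv ℝ Ψ p v) (Set.Ioo (-σ₀) σ₀ ×ˢ (Set.univ : Set ℝ)) := by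
  have hU : IsOpen (Set.Ioo (-σ₀) σ₀ ×ˢ (Set.univ : Set ℝ)) := isOpen_Ioo.prod isOpen_univ
  exact (ContinuousLinearMap.apply ℝ ℂ v).contDiff.comp_contDiffOn
    (hΨ.fderiv_of_isOpen hU (by exact_mod_cast le_top))


/-- The Jacobian matrix `f'(u⋆(x))` in components. -/
noncomputable def jacMat (n : ℕ) (f : (Fin n → ℝ) → Fin n → ℝ)
    (ustar : ℝ → Fin n → ℝ) (x : ℝ) (i j : Fin n) : ℝ :=
  fderiv ℝ f (ustar x) (Pi.single j 1) i

/-- Expansion of the critical Bloch eigenvalue: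
`λ'(0) = 0`, `λ''(0) = 2∫ (2i ∂²e/∂σ∂x(0,x) − u⋆′(x)) · D u_ad(x) dx`, and
equivalently `λ(σ) = −dσ² + O(|σ|³)` with `d` the negative of that integral. -/
theorem critical_bloch_eigenvalue_expansion
    (n : ℕ) (hn : 1 ≤ n) (d : Fin n → ℝ) (hd : ∀ i, 0 < d i)
    (f : (Fin n → ℝ) → Fin n → ℝ) (hf : ContDiff ℝ (⊤ : ℕ∞) f)
    (ustar : ℝ → Fin n → ℝ) (hsm : ContDiff ℝ (⊤ : ℕ∞) ustar)
    (heven : ∀ x : ℝ, ustar (-x) = ustar x)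
    (hper : ∀ x : ℝ, ustar (x + 2 * π) = ustar x)
    (hode : ∀ (x : ℝ) (i : Fin n),
      d i * deriv (deriv fun y => ustar y i) x + f (ustar x) i = 0)
    (uad : ℝ → Fin n → ℝ) (huadsm : ContDiff ℝ (⊤ : ℕ∞) uad)
    (huadodd : ∀ x : ℝ, uad (-x) = -uad x)
    (huadper : ∀ x : ℝ, uad (x + 2 * π) = uad x)
    (huadeq : ∀ (x : ℝ) (i : Fin n),
      d i * deriv (deriv fun y => uad y i) x
        + ∑ j : Fin n, jacMat n f ustar x j i * uad x j = 0)
    (huadnorm : (∫ x in (-π)..π, ∑ i, deriv (fun y => ustar y i) x * uad x i) = 1)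
    (σ₀ : ℝ) (hσ₀ : 0 < σ₀) (lam : ℝ → ℂ)
    (hlam : ContDiffOn ℝ (⊤ : ℕ∞) lam (Set.Ioo (-σ₀) σ₀)) (hlam0 : lam 0 = 0)
    (e : ℝ → ℝ → Fin n → ℂ)
    (he : ContDiffOn ℝ (⊤ : ℕ∞) (fun p : ℝ × ℝ => e p.1 p.2) (Set.Ioo (-σ₀) σ₀ ×ˢ Set.univ))
    (heper : ∀ (σ x : ℝ), e σ (x + 2 * π) = e σ x)
    (he0 : ∀ (x : ℝ) (i : Fin n), e 0 x i = (deriv (fun y => ustar y i) x : ℂ))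
    (heig : ∀ σ ∈ Set.Ioo (-σ₀) σ₀, ∀ (x : ℝ) (i : Fin n),
      (d i : ℂ) * (deriv (deriv fun y => e σ y i) x
          + 2 * Complex.I * σ * deriv (fun y => e σ y i) x - (σ : ℂ) ^ 2 * e σ x i)
        + ∑ j : Fin n, (jacMat n f ustar x i j : ℂ) * e σ x j
        = lam σ * e σ x i) :
    deriv lam 0 = 0 ∧
    deriv (deriv lam) 0
      = 2 * ∫ x in (-π)..π,
          ∑ i, (2 * Complex.I * deriv (fun σ => deriv (fun y => e σ y i) x) 0
              - (deriv (fun y => ustar y i) x : ℂ)) * ((d i : ℂ) * (uad x i : ℂ)) ∧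
    ∃ C > (0:ℝ), ∃ ε > (0:ℝ), ∀ σ : ℝ, |σ| < ε →
      ‖lam σ + (-(∫ x in (-π)..π,
          ∑ i, (2 * Complex.I * deriv (fun σ' => deriv (fun y => e σ' y i) x) 0
              - (deriv (fun y => ustar y i) x : ℂ)) * ((d i : ℂ) * (uad x i : ℂ)))) * σ ^ 2‖
        ≤ C * |σ| ^ 3 := by
  classical
  have hππ : (-π : ℝ) ≤ π := by linarith [Real.pi_pos]
  have hS : IsOpen (Set.Ioo (-σ₀) σ₀) := isOpen_Ioo
  have h0S : (0:ℝ) ∈ Set.Ioo (-σ₀) σ₀ := ⟨by linarith, hσ₀⟩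
  have hU : IsOpen (Set.Ioo (-σ₀) σ₀ ×ˢ (Set.univ : Set ℝ)) := hS.prod isOpen_univ
  have he' : ContDiffOn ℝ (⊤:ℕ∞) (fun p : ℝ × ℝ => e p.1 p.2)
      (Set.Ioo (-σ₀) σ₀ ×ˢ (Set.univ : Set ℝ)) := he.of_le (by simp)
  have hEi : ∀ i : Fin n, ContDiffOn ℝ (⊤:ℕ∞) (fun p : ℝ × ℝ => e p.1 p.2 i)
      (Set.Ioo (-σ₀) σ₀ ×ˢ (Set.univ : Set ℝ)) := fun i =>
    (ContinuousLinearMap.proj (R := ℝ) (φ := fun _ : Fin n => ℂ) i).contDiff.comp_contDiffOn he'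
  set E1 : Fin n → ℝ × ℝ → ℂ :=
    fun i p => fderiv ℝ (fun q : ℝ × ℝ => e q.1 q.2 i) p (0, 1) with hE1def
  have hE1 : ∀ i, ContDiffOn ℝ (⊤:ℕ∞) (E1 i) (Set.Ioo (-σ₀) σ₀ ×ˢ (Set.univ : Set ℝ)) :=
    fun i => fderiv_apply_contDiffOn _ (hEi i) (0, 1)
  have hpdx : ∀ (i : Fin n) {σ : ℝ}, σ ∈ Set.Ioo (-σ₀) σ₀ → ∀ x : ℝ,
      HasDerivAt (fun y => e σ y i) (E1 i (σ, x)) x := fun i _ hσ x =>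
    partial2_hasDerivAt _ (hEi i) hσ x
  have hderiv1 : ∀ (i : Fin n) {σ : ℝ}, σ ∈ Set.Ioo (-σ₀) σ₀ → ∀ x : ℝ,
      deriv (fun y => e σ y i) x = E1 i (σ, x) := fun i _ hσ x => (hpdx i hσ x).deriv
  have huadi : ∀ i, ContDiff ℝ (⊤:ℕ∞) (fun x => uad x i) := fun i =>
    (contDiff_pi.mp (huadsm.of_le (by simp))) i
  have husti : ∀ i, ContDiff ℝ (⊤:ℕ∞) (fun x => ustar x i) := fun i =>
    (contDiff_pi.mp (hsm.of_le (by simp))) i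
  have hbC : ∀ i, ContDiff ℝ (⊤:ℕ∞) (fun x : ℝ => ((uad x i : ℝ) : ℂ)) := fun i =>
    Complex.ofRealCLM.contDiff.comp (huadi i)
  have hcast : ∀ (g : ℝ → ℝ), Differentiable ℝ g → ∀ x : ℝ,
      deriv (fun y => ((g y : ℝ) : ℂ)) x = ((deriv g x : ℝ) : ℂ) := fun g hg x =>
    ((hg x).hasDerivAt.ofReal_comp).deriv
  have hustd : ∀ i, Differentiable ℝ (fun y => ustar y i) := fun i =>
    (husti i).differentiable (by simp)
  have hustd1 : ∀ i, Differentiable ℝ (deriv (fun y => ustar y i)) := fun i =>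
    ((contDiff_infty_iff_deriv.mp (husti i)).2).differentiable (by simp)
  have huadd : ∀ i, Differentiable ℝ (fun y => uad y i) := fun i =>
    (huadi i).differentiable (by simp)
  have huadd1 : ∀ i, Differentiable ℝ (deriv (fun y => uad y i)) := fun i =>
    ((contDiff_infty_iff_deriv.mp (huadi i)).2).differentiable (by simp)
  have he0c : ∀ (x : ℝ) (i : Fin n), e 0 x i = ((deriv (fun y => ustar y i) x : ℝ) : ℂ) := by
    intro x i
    rw [he0 x i]
    exact hcast _ (hustd i) x
  set ΦG : ℝ × ℝ → ℂ := fun p => ∑ i, e p.1 p.2 i * ((uad p.2 i : ℝ) : ℂ) with hΦGdef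
  set ΦH : ℝ × ℝ → ℂ := fun p => ∑ i, (d i : ℂ) * (E1 i p * ((uad p.2 i : ℝ) : ℂ)) with hΦHdef
  set ΦK : ℝ × ℝ → ℂ := fun p => ∑ i, (d i : ℂ) * (e p.1 p.2 i * ((uad p.2 i : ℝ) : ℂ))
    with hΦKdef
  have hbP : ∀ i, ContDiff ℝ (⊤:ℕ∞) (fun p : ℝ × ℝ => ((uad p.2 i : ℝ) : ℂ)) := fun i =>
    (hbC i).comp contDiff_snd
  have hΦGc : ContDiffOn ℝ (⊤:ℕ∞) ΦG (Set.Ioo (-σ₀) σ₀ ×ˢ (Set.univ : Set ℝ)) :=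
    ContDiffOn.sum fun i _ => (hEi i).mul ((hbP i).contDiffOn)
  have hΦHc : ContDiffOn ℝ (⊤:ℕ∞) ΦH (Set.Ioo (-σ₀) σ₀ ×ˢ (Set.univ : Set ℝ)) :=
    ContDiffOn.sum fun i _ => contDiffOn_const.mul ((hE1 i).mul ((hbP i).contDiffOn))
  have hΦKc : ContDiffOn ℝ (⊤:ℕ∞) ΦK (Set.Ioo (-σ₀) σ₀ ×ˢ (Set.univ : Set ℝ)) :=
    ContDiffOn.sum fun i _ => contDiffOn_const.mul ((hEi i).mul ((hbP i).contDiffOn))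
  set G : ℝ → ℂ := fun σ => ∫ x in (-π)..π, ΦG (σ, x) with hGdef
  set H : ℝ → ℂ := fun σ => ∫ x in (-π)..π, ΦH (σ, x) with hHdef
  set K : ℝ → ℂ := fun σ => ∫ x in (-π)..π, ΦK (σ, x) with hKdef
  set IH : ℂ := ∫ x in (-π)..π, fderiv ℝ ΦH (0, x) (1, 0) with hIHdef
  have hkeyG := key_hasDerivAt_integral σ₀ hσ₀ ΦG hΦGc
  have hkeyH := key_hasDerivAt_integral σ₀ hσ₀ ΦH hΦHc
  have hkeyK := key_hasDerivAt_integral σ₀ hσ₀ ΦK hΦKc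
  have hGcont : ContinuousAt G 0 := hkeyG.2.continuousAt
  have hKcont : ContinuousAt K 0 := hkeyK.2.continuousAt
  have hHder : HasDerivAt H IH 0 := hkeyH.2
  have huad2cont : ∀ i, Continuous (deriv (deriv (fun y => uad y i))) := fun i =>
    ((contDiff_infty_iff_deriv.mp ((contDiff_infty_iff_deriv.mp (huadi i)).2)).2).continuous
  have hstar : ∀ σ ∈ Set.Ioo (-σ₀) σ₀,
      lam σ * G σ = 2 * Complex.I * σ * H σ - (σ : ℂ) ^ 2 * K σ := by
    intro σ hσ
    have haC : ∀ i, ContDiff ℝ (⊤:ℕ∞) (fun x => e σ x i) := fun i =>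
      slice2_contDiff _ (hEi i) hσ
    have ha1eq : ∀ i, deriv (fun y => e σ y i) = fun x => E1 i (σ, x) :=
      fun i => funext fun x => hderiv1 i hσ x
    have ha1C : ∀ i, ContDiff ℝ (⊤:ℕ∞) (deriv (fun y => e σ y i)) := fun i => by
      rw [ha1eq i]; exact slice2_contDiff _ (hE1 i) hσ
    have ha2cont : ∀ i, Continuous (deriv (deriv (fun y => e σ y i))) := fun i =>
      ((contDiff_infty_iff_deriv.mp (ha1C i)).2).continuous
    have ha1d : ∀ i, Differentiable ℝ (deriv (fun y => e σ y i)) := fun i =>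
      (contDiff_infty_iff_deriv.mp (ha1C i)).1
    have hbd : ∀ (i : Fin n) (x : ℝ), HasDerivAt (fun y : ℝ => ((uad y i : ℝ) : ℂ))
        ((deriv (fun y => uad y i) x : ℝ) : ℂ) x := fun i x =>
      ((huadd i x).hasDerivAt).ofReal_comp
    have hb2d : ∀ (i : Fin n) (x : ℝ),
        HasDerivAt (fun y : ℝ => ((deriv (fun y' => uad y' i) y : ℝ) : ℂ))
        ((deriv (deriv (fun y' => uad y' i)) x : ℝ) : ℂ) x := fun i x =>
      ((huadd1 i x).hasDerivAt).ofReal_comp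
    -- the Wronskian-type function and its derivative
    have hW : ∀ x : ℝ, HasDerivAt (fun x => ∑ i, (d i : ℂ) *
        (deriv (fun y => e σ y i) x * ((uad x i : ℝ) : ℂ)
          - e σ x i * ((deriv (fun y => uad y i) x : ℝ) : ℂ)))
        (∑ i, (d i : ℂ) *
        (deriv (deriv (fun y => e σ y i)) x * ((uad x i : ℝ) : ℂ)
          - e σ x i * ((deriv (deriv (fun y => uad y i)) x : ℝ) : ℂ))) x := by
      intro x
      apply HasDerivAt.fun_sum
      intro i _
      have h1 : HasDerivAt (deriv (fun y => e σ y i)) (deriv (deriv (fun y => e σ y i)) x) x :=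
        ((ha1d i) x).hasDerivAt
      have h3 : HasDerivAt (fun y => e σ y i) (deriv (fun y => e σ y i) x) x :=
        (((haC i).differentiable (by simp)) x).hasDerivAt
      have h0 := ((h1.fun_mul (hbd i x)).sub (h3.fun_mul (hb2d i x))).const_mul ((d i : ℂ))
      exact h0.congr_deriv (by ring)
    have hWcont : Continuous (fun x => ∑ i, (d i : ℂ) *
        (deriv (deriv (fun y => e σ y i)) x * ((uad x i : ℝ) : ℂ)
          - e σ x i * ((deriv (deriv (fun y => uad y i)) x : ℝ) : ℂ))) := by
      refine continuous_finset_sum _ fun i _ => continuous_const.mul (Continuous.sub ?_ ?_)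
      · exact (ha2cont i).mul (hbC i).continuous
      · exact ((haC i).continuous).mul (Complex.continuous_ofReal.comp (huad2cont i))
    have hFTC := intervalIntegral.integral_eq_sub_of_hasDerivAt
      (f := fun x => ∑ i, (d i : ℂ) *
        (deriv (fun y => e σ y i) x * ((uad x i : ℝ) : ℂ)
          - e σ x i * ((deriv (fun y => uad y i) x : ℝ) : ℂ)))
      (f' := fun x => ∑ i, (d i : ℂ) *
        (deriv (deriv (fun y => e σ y i)) x * ((uad x i : ℝ) : ℂ)
          - e σ x i * ((deriv (deriv (fun y => uad y i)) x : ℝ) : ℂ)))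
      (a := -π) (b := π) (fun x _ => hW x) (hWcont.intervalIntegrable _ _)
    -- periodicity kills the boundary term
    have hper1 : ∀ (i : Fin n) (x : ℝ), e σ (x + 2*π) i = e σ x i := fun i x =>
      congrFun (heper σ x) i
    have hper2 : ∀ (i : Fin n) (x : ℝ),
        deriv (fun y => e σ y i) (x + 2*π) = deriv (fun y => e σ y i) x := fun i x =>
      deriv_periodic _ _ (hper1 i) x
    have hper3 : ∀ (i : Fin n) (x : ℝ), uad (x + 2*π) i = uad x i := fun i x =>
      congrFun (huadper x) i
    have hper4 : ∀ (i : Fin n) (x : ℝ),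
        deriv (fun y => uad y i) (x + 2*π) = deriv (fun y => uad y i) x := fun i x =>
      deriv_periodic _ _ (hper3 i) x
    have hzero : (∫ x in (-π)..π, ∑ i, (d i : ℂ) *
        (deriv (deriv (fun y => e σ y i)) x * ((uad x i : ℝ) : ℂ)
          - e σ x i * ((deriv (deriv (fun y => uad y i)) x : ℝ) : ℂ))) = 0 := by
      rw [hFTC]
      have h2 : (∑ i, (d i : ℂ) *
          (deriv (fun y => e σ y i) (-π + 2*π) * ((uad (-π + 2*π) i : ℝ) : ℂ)
            - e σ (-π + 2*π) i * ((deriv (fun y => uad y i) (-π + 2*π) : ℝ) : ℂ)))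
          = ∑ i, (d i : ℂ) *
          (deriv (fun y => e σ y i) (-π) * ((uad (-π) i : ℝ) : ℂ)
            - e σ (-π) i * ((deriv (fun y => uad y i) (-π) : ℝ) : ℂ)) := by
        simp only [hper1, hper2, hper3, hper4]
      rw [show -π + 2*π = π by ring] at h2
      beta_reduce
      rw [h2, sub_self]
    -- pointwise identity from the eigenvalue equation and the adjoint equation
    have hpt : ∀ x : ℝ, (∑ i, (d i : ℂ) *
        (deriv (deriv (fun y => e σ y i)) x * ((uad x i : ℝ) : ℂ)
          - e σ x i * ((deriv (deriv (fun y => uad y i)) x : ℝ) : ℂ)))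
        = lam σ * (∑ i, e σ x i * ((uad x i : ℝ) : ℂ))
          - 2*Complex.I*σ * (∑ i, (d i : ℂ) *
              (deriv (fun y => e σ y i) x * ((uad x i : ℝ) : ℂ)))
          + (σ:ℂ)^2 * (∑ i, (d i : ℂ) * (e σ x i * ((uad x i : ℝ) : ℂ))) := by
      intro x
      have h5 : ∀ i : Fin n, (d i : ℂ) * deriv (deriv fun y => e σ y i) x
          = lam σ * e σ x i - (∑ j, (jacMat n f ustar x i j : ℂ) * e σ x j)
            - 2*Complex.I*σ*((d i : ℂ) * deriv (fun y => e σ y i) x)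
            + (σ:ℂ)^2*((d i : ℂ) * e σ x i) := by
        intro i
        have h := heig σ hσ x i
        linear_combination h
      have h6 : ∀ i : Fin n, (d i : ℂ) * ((deriv (deriv (fun y => uad y i)) x : ℝ) : ℂ)
          = - ∑ j, (jacMat n f ustar x j i : ℂ) * ((uad x j : ℝ) : ℂ) := by
        intro i
        have h' : d i * deriv (deriv fun y => uad y i) x
            = - ∑ j, jacMat n f ustar x j i * uad x j := by
          linarith [huadeq x i]
        calc (d i : ℂ) * ((deriv (deriv (fun y => uad y i)) x : ℝ) : ℂ)
            = ((d i * deriv (deriv fun y => uad y i) x : ℝ) : ℂ) := by push_cast; ring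
          _ = ((- ∑ j, jacMat n f ustar x j i * uad x j : ℝ) : ℂ) := by rw [h']
          _ = - ∑ j, (jacMat n f ustar x j i : ℂ) * ((uad x j : ℝ) : ℂ) := by push_cast; ring
      have hcross : ∑ i, (∑ j, (jacMat n f ustar x i j : ℂ) * e σ x j) * ((uad x i : ℝ) : ℂ)
          = ∑ i, e σ x i * (∑ j, (jacMat n f ustar x j i : ℂ) * ((uad x j : ℝ) : ℂ)) := by
        simp_rw [Finset.sum_mul, Finset.mul_sum]
        rw [Finset.sum_comm]
        exact Finset.sum_congr rfl fun i _ => Finset.sum_congr rfl fun j _ => by ring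
      have e1 : ∑ i, ((d i : ℂ) * deriv (deriv (fun y => e σ y i)) x) * ((uad x i : ℝ) : ℂ)
          = lam σ * (∑ i, e σ x i * ((uad x i : ℝ) : ℂ))
            - (∑ i, (∑ j, (jacMat n f ustar x i j : ℂ) * e σ x j) * ((uad x i : ℝ) : ℂ))
            - 2*Complex.I*σ * (∑ i, (d i : ℂ) *
                (deriv (fun y => e σ y i) x * ((uad x i : ℝ) : ℂ)))
            + (σ:ℂ)^2 * (∑ i, (d i : ℂ) * (e σ x i * ((uad x i : ℝ) : ℂ))) := by
        simp_rw [Finset.mul_sum, ← Finset.sum_sub_distrib, ← Finset.sum_add_distrib]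
        refine Finset.sum_congr rfl fun i _ => ?_
        rw [h5 i]
        ring
      have e2 : ∑ i, e σ x i * ((d i : ℂ) * ((deriv (deriv (fun y => uad y i)) x : ℝ) : ℂ))
          = - ∑ i, e σ x i * (∑ j, (jacMat n f ustar x j i : ℂ) * ((uad x j : ℝ) : ℂ)) := by
        rw [← Finset.sum_neg_distrib]
        exact Finset.sum_congr rfl fun i _ => by rw [h6 i]; ring
      have e0 : (∑ i, (d i : ℂ) *
          (deriv (deriv (fun y => e σ y i)) x * ((uad x i : ℝ) : ℂ)
            - e σ x i * ((deriv (deriv (fun y => uad y i)) x : ℝ) : ℂ)))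
          = (∑ i, ((d i : ℂ) * deriv (deriv (fun y => e σ y i)) x) * ((uad x i : ℝ) : ℂ))
            - ∑ i, e σ x i * ((d i : ℂ) * ((deriv (deriv (fun y => uad y i)) x : ℝ) : ℂ)) := by
        rw [← Finset.sum_sub_distrib]
        exact Finset.sum_congr rfl fun i _ => by ring
      rw [e0, e1, e2, hcross]
      ring
    -- split the integral
    have hint1 : IntervalIntegrable (fun x => ∑ i, e σ x i * ((uad x i : ℝ) : ℂ))
        volume (-π) π := by
      refine (continuous_finset_sum _ fun i _ => ((haC i).continuous).mul
        (hbC i).continuous).intervalIntegrable _ _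
    have hint2 : IntervalIntegrable (fun x => ∑ i, (d i : ℂ) *
        (deriv (fun y => e σ y i) x * ((uad x i : ℝ) : ℂ))) volume (-π) π := by
      refine (continuous_finset_sum _ fun i _ => continuous_const.mul
        (((ha1C i).continuous).mul (hbC i).continuous)).intervalIntegrable _ _
    have hint3 : IntervalIntegrable (fun x => ∑ i, (d i : ℂ) *
        (e σ x i * ((uad x i : ℝ) : ℂ))) volume (-π) π := by
      refine (continuous_finset_sum _ fun i _ => continuous_const.mul
        (((haC i).continuous).mul (hbC i).continuous)).intervalIntegrable _ _
    have hsplit : (0:ℂ)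
        = lam σ * (∫ x in (-π)..π, ∑ i, e σ x i * ((uad x i : ℝ) : ℂ))
          - 2*Complex.I*σ * (∫ x in (-π)..π, ∑ i, (d i : ℂ) *
              (deriv (fun y => e σ y i) x * ((uad x i : ℝ) : ℂ)))
          + (σ:ℂ)^2 * (∫ x in (-π)..π, ∑ i, (d i : ℂ) *
              (e σ x i * ((uad x i : ℝ) : ℂ))) := by
      rw [← intervalIntegral.integral_const_mul, ← intervalIntegral.integral_const_mul,
        ← intervalIntegral.integral_const_mul,
        ← intervalIntegral.integral_sub (hint1.const_mul _) (hint2.const_mul _),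
        ← intervalIntegral.integral_add ((hint1.const_mul _).sub (hint2.const_mul _))
          (hint3.const_mul _)]
      rw [← hzero]
      exact intervalIntegral.integral_congr fun x _ => hpt x
    -- identify the three integrals with G, H, K
    have hGeq : G σ = ∫ x in (-π)..π, ∑ i, e σ x i * ((uad x i : ℝ) : ℂ) := by
      simp only [hGdef, hΦGdef]
    have hHeq : H σ = ∫ x in (-π)..π, ∑ i, (d i : ℂ) *
        (deriv (fun y => e σ y i) x * ((uad x i : ℝ) : ℂ)) := by
      simp only [hHdef]
      refine intervalIntegral.integral_congr fun x _ => ?_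
      exact Finset.sum_congr rfl fun i _ => by rw [hderiv1 i hσ x]
    have hKeq : K σ = ∫ x in (-π)..π, ∑ i, (d i : ℂ) *
        (e σ x i * ((uad x i : ℝ) : ℂ)) := by
      simp only [hKdef, hΦKdef]
    rw [hGeq, hHeq, hKeq]
    linear_combination -hsplit
  have hG0 : G 0 = 1 := by
    have hpt : ∀ x : ℝ, ΦG (0, x) = ((∑ i, deriv (fun y => ustar y i) x * uad x i : ℝ) : ℂ) := by
      intro x
      simp only [hΦGdef]
      push_cast
      exact Finset.sum_congr rfl fun i _ => by rw [he0c x i]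
    simp only [hGdef, hpt]
    rw [intervalIntegral.integral_ofReal, huadnorm, Complex.ofReal_one]
  have hH0 : H 0 = 0 := by
    have hE10 : ∀ (i : Fin n) (x : ℝ),
        E1 i (0, x) = ((deriv (deriv (fun y => ustar y i)) x : ℝ) : ℂ) := by
      intro i x
      rw [← hderiv1 i h0S x]
      rw [show (fun y => e 0 y i) = fun y => ((deriv (fun y' => ustar y' i) y : ℝ) : ℂ) from
        funext fun y => he0c y i]
      exact hcast _ (hustd1 i) x
    have hpt : ∀ x : ℝ, ΦH (0, x)
        = ((∑ i, d i * (deriv (deriv (fun y => ustar y i)) x * uad x i) : ℝ) : ℂ) := by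
      intro x
      simp only [hΦHdef, hE10]
      push_cast
      ring
    have hodd : ∀ x : ℝ, (fun x : ℝ => ∑ i, d i * (deriv (deriv (fun y => ustar y i)) x * uad x i))
        (-x) = -(fun x : ℝ => ∑ i, d i * (deriv (deriv (fun y => ustar y i)) x * uad x i)) x := by
      intro x
      simp only
      rw [← Finset.sum_neg_distrib]
      refine Finset.sum_congr rfl fun i _ => ?_
      have h1 : ∀ y : ℝ, (fun y => ustar y i) (-y) = (fun y => ustar y i) y := fun y =>
        congrFun (heven y) i
      have h2 : deriv (fun y => ustar y i) (-x) = -deriv (fun y => ustar y i) x :=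
        deriv_even_odd _ h1 x
      have h3 : ∀ y : ℝ, deriv (fun y' => ustar y' i) (-y) = -deriv (fun y' => ustar y' i) y :=
        fun y => deriv_even_odd _ h1 y
      have h4 : deriv (deriv (fun y => ustar y i)) (-x) = deriv (deriv (fun y => ustar y i)) x :=
        deriv_odd_even _ h3 x
      have h5 : uad (-x) i = -uad x i := by rw [huadodd x]; exact Pi.neg_apply _ _
      rw [h4, h5]
      ring
    simp only [hHdef, hpt]
    rw [intervalIntegral.integral_ofReal, integral_odd_zero _ hodd, Complex.ofReal_zero]
  have hItar : (∫ x in (-π)..π,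
        ∑ i, (2 * Complex.I * deriv (fun σ => deriv (fun y => e σ y i) x) 0
            - (deriv (fun y => ustar y i) x : ℂ)) * ((d i : ℂ) * (uad x i : ℂ)))
      = 2 * Complex.I * IH - K 0 := by
    have hpds : ∀ (i : Fin n) (x : ℝ),
        HasDerivAt (fun s => E1 i (s, x)) (fderiv ℝ (E1 i) (0, x) (1, 0)) 0 :=
      fun i x => partial1_hasDerivAt _ (hE1 i) h0S x
    have hcieq : ∀ (i : Fin n) (x : ℝ), deriv (fun σ => deriv (fun y => e σ y i) x) 0
        = fderiv ℝ (E1 i) (0, x) (1, 0) := by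
      intro i x
      have hev : (fun σ => deriv (fun y => e σ y i) x) =ᶠ[nhds 0] (fun σ => E1 i (σ, x)) := by
        filter_upwards [hS.mem_nhds h0S] with σ hσ
        exact hderiv1 i hσ x
      rw [hev.deriv_eq]
      exact (hpds i x).deriv
    have hfd : ∀ x : ℝ, fderiv ℝ ΦH (0, x) (1, 0)
        = ∑ i, (d i : ℂ) * (fderiv ℝ (E1 i) (0, x) (1, 0) * ((uad x i : ℝ) : ℂ)) := by
      intro x
      have h1 : HasDerivAt (fun s => ΦH (s, x)) (fderiv ℝ ΦH (0, x) (1, 0)) 0 :=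
        partial1_hasDerivAt _ hΦHc h0S x
      have h2 : HasDerivAt (fun s => ΦH (s, x))
          (∑ i, (d i : ℂ) * (fderiv ℝ (E1 i) (0, x) (1, 0) * ((uad x i : ℝ) : ℂ))) 0 := by
        simp only [hΦHdef]
        exact HasDerivAt.fun_sum fun i _ => (((hpds i x).mul_const _).const_mul _)
      exact h1.unique h2
    have hTint : ∀ x : ℝ,
        (∑ i, (2 * Complex.I * deriv (fun σ => deriv (fun y => e σ y i) x) 0
            - (deriv (fun y => ustar y i) x : ℂ)) * ((d i : ℂ) * (uad x i : ℂ)))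
        = 2 * Complex.I * fderiv ℝ ΦH (0, x) (1, 0) - ΦK (0, x) := by
      intro x
      rw [hfd x]
      simp only [hΦKdef]
      rw [Finset.mul_sum, ← Finset.sum_sub_distrib]
      refine Finset.sum_congr rfl fun i _ => ?_
      rw [hcieq i x, ← he0 x i]
      ring
    have hΦK0int : IntervalIntegrable (fun x => ΦK (0, x)) volume (-π) π := by
      have : Continuous (fun x => ΦK (0, x)) := by
        simp only [hΦKdef]
        refine continuous_finset_sum _ fun i _ => continuous_const.mul (Continuous.mul ?_ ?_)
        · exact (slice2_contDiff _ (hEi i) h0S).continuous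
        · exact (hbC i).continuous
      exact this.intervalIntegrable _ _
    rw [intervalIntegral.integral_congr (fun x _ => hTint x)]
    rw [intervalIntegral.integral_sub ((hkeyH.1).const_mul _) hΦK0int,
      intervalIntegral.integral_const_mul]
  have hlamd : HasDerivAt lam (deriv lam 0) 0 :=
    (((hlam.of_le (by simp)).contDiffAt (hS.mem_nhds h0S)).differentiableAt
      (by simp : ((⊤ : ℕ∞) : WithTop ℕ∞) ≠ 0)).hasDerivAt
  have hGne : ∀ᶠ σ in nhds (0:ℝ), G σ ≠ 0 :=
    hGcont.eventually_ne (by rw [hG0]; exact one_ne_zero)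
  have part1 : deriv lam 0 = 0 := by
    have hslope : Filter.Tendsto (slope lam 0) (nhdsWithin 0 {(0:ℝ)}ᶜ) (nhds (deriv lam 0)) :=
      hasDerivAt_iff_tendsto_slope.mp hlamd
    have hQ : Filter.Tendsto (fun σ : ℝ => (2*Complex.I*H σ - (σ:ℂ)*K σ)/G σ)
        (nhdsWithin 0 {(0:ℝ)}ᶜ) (nhds 0) := by
      have hHt : Filter.Tendsto H (nhds 0) (nhds (H 0)) := hHder.continuousAt
      have hnum : Filter.Tendsto (fun σ : ℝ => 2*Complex.I*H σ - (σ:ℂ)*K σ)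
          (nhds 0) (nhds 0) := by
        have h := ((tendsto_const_nhds (x := (2*Complex.I : ℂ)) (f := nhds (0:ℝ))).mul hHt).sub
          ((Complex.continuous_ofReal.tendsto 0).mul hKcont)
        simpa [hH0] using h
      have hden : Filter.Tendsto G (nhds 0) (nhds 1) := by
        have := hGcont
        rwa [ContinuousAt, hG0] at this
      have h := hnum.div hden one_ne_zero
      simpa [Pi.div_def] using h.mono_left nhdsWithin_le_nhds
    have heqq : slope lam 0 =ᶠ[nhdsWithin 0 {(0:ℝ)}ᶜ]
        fun σ => (2*Complex.I*H σ - (σ:ℂ)*K σ)/G σ := by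
      filter_upwards [nhdsWithin_le_nhds (hS.mem_nhds h0S), nhdsWithin_le_nhds hGne,
        self_mem_nhdsWithin] with σ hσS hGσ hσne
      have hσne' : σ ≠ 0 := hσne
      have hst := hstar σ hσS
      rw [slope_def_module, hlam0, sub_zero, sub_zero]
      rw [show (σ:ℝ)⁻¹ • lam σ = ((σ:ℂ))⁻¹ * lam σ by
        rw [Complex.real_smul, Complex.ofReal_inv]]
      have hσc : (σ:ℂ) ≠ 0 := Complex.ofReal_ne_zero.mpr hσne'
      field_simp
      linear_combination hst
    exact tendsto_nhds_unique (hslope.congr' heqq) hQ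
  -- Taylor-type bounds for lam near 0
  set ε₁ : ℝ := σ₀ / 2 with hε₁def
  have hε₁ : 0 < ε₁ := by positivity
  have hIccS : Set.Icc (-ε₁) ε₁ ⊆ Set.Ioo (-σ₀) σ₀ := by
    intro t ht
    constructor
    · nlinarith [ht.1]
    · nlinarith [ht.2]
  have hlam1 : ContDiffOn ℝ (⊤:ℕ∞) lam (Set.Ioo (-σ₀) σ₀) := hlam.of_le (by simp)
  have hl1 : ContDiffOn ℝ (⊤:ℕ∞) (deriv lam) (Set.Ioo (-σ₀) σ₀) :=
    hlam1.deriv_of_isOpen (m := (⊤:ℕ∞)) hS (by exact_mod_cast le_top)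
  have hl2 : ContDiffOn ℝ (⊤:ℕ∞) (deriv (deriv lam)) (Set.Ioo (-σ₀) σ₀) :=
    hl1.deriv_of_isOpen (m := (⊤:ℕ∞)) hS (by exact_mod_cast le_top)
  have hl3cont : ContinuousOn (deriv (deriv (deriv lam))) (Set.Ioo (-σ₀) σ₀) :=
    (hl2.deriv_of_isOpen (m := (⊤:ℕ∞)) hS (by exact_mod_cast le_top)).continuousOn
  have hDg : ∀ (g : ℝ → ℂ), ContDiffOn ℝ (⊤:ℕ∞) g (Set.Ioo (-σ₀) σ₀) →
      ∀ t ∈ Set.Ioo (-σ₀) σ₀, HasDerivAt g (deriv g t) t := fun g hg t ht =>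
    ((hg.contDiffAt (hS.mem_nhds ht)).differentiableAt (by simp : ((⊤ : ℕ∞) : WithTop ℕ∞) ≠ 0)).hasDerivAt
  obtain ⟨M, hM⟩ := (isCompact_Icc (a := -ε₁) (b := ε₁)).exists_bound_of_continuousOn
    (hl3cont.mono hIccS)
  have hM0 : 0 ≤ M := le_trans (norm_nonneg _) (hM 0 ⟨by linarith, by linarith⟩)
  have huIccsub : ∀ σ : ℝ, |σ| ≤ ε₁ → Set.uIcc (0:ℝ) σ ⊆ Set.Icc (-ε₁) ε₁ := by
    intro σ hσ
    have h1 := abs_le.mp hσ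
    rcases le_total (0:ℝ) σ with h | h
    · rw [Set.uIcc_of_le h]
      intro t ht
      exact ⟨by linarith [ht.1], by linarith [ht.2]⟩
    · rw [Set.uIcc_of_ge h]
      intro t ht
      exact ⟨by linarith [ht.1], by linarith [ht.2]⟩
  have habs : ∀ σ t : ℝ, t ∈ Set.uIoc (0:ℝ) σ → |t| ≤ |σ| := by
    intro σ t ht
    rcases le_total (0:ℝ) σ with h | h
    · rw [Set.uIoc_of_le h] at ht
      rw [abs_of_pos ht.1, abs_of_nonneg h]
      exact ht.2
    · rw [show Set.uIoc (0:ℝ) σ = Set.Ioc σ 0 by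
        rw [Set.uIoc]; rw [min_eq_right h, max_eq_left h]] at ht
      rw [abs_of_nonpos ht.2, abs_of_nonpos h]
      linarith [ht.1]
  have habsIcc : ∀ σ t : ℝ, |σ| ≤ ε₁ → t ∈ Set.uIoc (0:ℝ) σ → t ∈ Set.Icc (-ε₁) ε₁ := by
    intro σ t hσ ht
    have := (habs σ t ht).trans hσ
    exact ⟨by linarith [abs_le.mp this |>.1], by linarith [abs_le.mp this |>.2]⟩
  have hB2 : ∀ σ : ℝ, |σ| ≤ ε₁ →
      ‖deriv (deriv lam) σ - deriv (deriv lam) 0‖ ≤ M * |σ| := by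
    intro σ hσ
    have hsub := huIccsub σ hσ
    have hFTC := intervalIntegral.integral_eq_sub_of_hasDerivAt
      (f := deriv (deriv lam)) (f' := deriv (deriv (deriv lam))) (a := 0) (b := σ)
      (fun t ht => hDg _ hl2 t (hIccS (hsub ht)))
      (((hl3cont.mono hIccS).mono hsub).intervalIntegrable)
    rw [← hFTC]
    have h := intervalIntegral.norm_integral_le_of_norm_le_const (C := M)
      (f := deriv (deriv (deriv lam))) (a := 0) (b := σ)
      (fun t ht => hM t (habsIcc σ t hσ ht))
    simpa using h
  have hB1 : ∀ σ : ℝ, |σ| ≤ ε₁ →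
      ‖deriv lam σ - deriv (deriv lam) 0 * σ‖ ≤ M * |σ|^2 := by
    intro σ hσ
    have hsub := huIccsub σ hσ
    have hder : ∀ t ∈ Set.uIcc (0:ℝ) σ,
        HasDerivAt (fun t : ℝ => deriv lam t - deriv (deriv lam) 0 * (t:ℂ))
          (deriv (deriv lam) t - deriv (deriv lam) 0) t := by
      intro t ht
      have h1 := hDg _ hl1 t (hIccS (hsub ht))
      have h2 : HasDerivAt (fun t : ℝ => deriv (deriv lam) 0 * (t:ℂ))
          (deriv (deriv lam) 0) t := by
        have := ((hasDerivAt_id t).ofReal_comp).const_mul (deriv (deriv lam) 0)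
        simpa using this
      exact h1.sub h2
    have hcont : ContinuousOn (fun t => deriv (deriv lam) t - deriv (deriv lam) 0)
        (Set.uIcc (0:ℝ) σ) :=
      ((hl2.continuousOn.mono (fun t ht => hIccS (hsub ht)))).sub continuousOn_const
    have hFTC := intervalIntegral.integral_eq_sub_of_hasDerivAt
      (a := 0) (b := σ) hder (hcont.intervalIntegrable)
    have hval : (∫ t in (0:ℝ)..σ, (deriv (deriv lam) t - deriv (deriv lam) 0))
        = deriv lam σ - deriv (deriv lam) 0 * σ := by
      rw [hFTC, part1]
      push_cast
      ring
    rw [← hval]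
    have h := intervalIntegral.norm_integral_le_of_norm_le_const (C := M * |σ|)
      (f := fun t => deriv (deriv lam) t - deriv (deriv lam) 0) (a := 0) (b := σ)
      (fun t ht => le_trans (hB2 t (le_trans (habs σ t ht) hσ))
        (mul_le_mul_of_nonneg_left (habs σ t ht) hM0))
    calc ‖∫ t in (0:ℝ)..σ, (deriv (deriv lam) t - deriv (deriv lam) 0)‖
        ≤ M * |σ| * |σ - 0| := h
      _ = M * |σ|^2 := by rw [sub_zero]; ring
  have hB0 : ∀ σ : ℝ, |σ| ≤ ε₁ →
      ‖lam σ - deriv (deriv lam) 0 / 2 * (σ:ℂ)^2‖ ≤ M * |σ|^3 := by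
    intro σ hσ
    have hsub := huIccsub σ hσ
    have hder : ∀ t ∈ Set.uIcc (0:ℝ) σ,
        HasDerivAt (fun t : ℝ => lam t - deriv (deriv lam) 0 / 2 * (t:ℂ)^2)
          (deriv lam t - deriv (deriv lam) 0 * (t:ℂ)) t := by
      intro t ht
      have h1 := hDg _ hlam1 t (hIccS (hsub ht))
      have h2 : HasDerivAt (fun t : ℝ => deriv (deriv lam) 0 / 2 * (t:ℂ)^2)
          (deriv (deriv lam) 0 * (t:ℂ)) t := by
        have hsq : HasDerivAt (fun t : ℝ => ((t:ℂ))^2) (2*(t:ℂ)) t := by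
          have h := ((hasDerivAt_id t).ofReal_comp).mul ((hasDerivAt_id t).ofReal_comp)
          have hfun : (fun y : ℝ => ((y:ℂ))^2) = fun y : ℝ => (y:ℂ)*(y:ℂ) := by
            funext y; ring
          rw [hfun]
          exact h.congr_deriv (by push_cast [id_eq]; ring)
        have h := hsq.const_mul (deriv (deriv lam) 0 / 2)
        exact h.congr_deriv (by ring)
      exact h1.sub h2
    have hcont : ContinuousOn (fun t : ℝ => deriv lam t - deriv (deriv lam) 0 * (t:ℂ))
        (Set.uIcc (0:ℝ) σ) := by
      refine ((hl1.continuousOn.mono (fun t ht => hIccS (hsub ht)))).sub ?_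
      exact (continuous_const.mul Complex.continuous_ofReal).continuousOn
    have hFTC := intervalIntegral.integral_eq_sub_of_hasDerivAt
      (a := 0) (b := σ) hder (hcont.intervalIntegrable)
    have hval : (∫ t in (0:ℝ)..σ, (deriv lam t - deriv (deriv lam) 0 * (t:ℂ)))
        = lam σ - deriv (deriv lam) 0 / 2 * (σ:ℂ)^2 := by
      rw [hFTC, hlam0]
      push_cast
      ring
    rw [← hval]
    have h := intervalIntegral.norm_integral_le_of_norm_le_const (C := M * |σ|^2)
      (f := fun t => deriv lam t - deriv (deriv lam) 0 * (t:ℂ)) (a := 0) (b := σ)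
      (fun t ht => le_trans (hB1 t (le_trans (habs σ t ht) hσ))
        (mul_le_mul_of_nonneg_left (pow_le_pow_left₀ (abs_nonneg t) (habs σ t ht) 2) hM0))
    calc ‖∫ t in (0:ℝ)..σ, (deriv lam t - deriv (deriv lam) 0 * (t:ℂ))‖
        ≤ M * |σ|^2 * |σ - 0| := h
      _ = M * |σ|^3 := by rw [sub_zero]; ring
  -- identify the second derivative
  have hLtend : Filter.Tendsto (fun σ : ℝ => lam σ / (σ:ℂ)^2) (nhdsWithin 0 {(0:ℝ)}ᶜ)
      (nhds (deriv (deriv lam) 0 / 2)) := by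
    rw [← tendsto_sub_nhds_zero_iff]
    apply squeeze_zero_norm' (a := fun σ : ℝ => M * |σ|)
    · have hev : ∀ᶠ σ in nhdsWithin (0:ℝ) {(0:ℝ)}ᶜ, |σ| ≤ ε₁ ∧ σ ≠ 0 := by
        filter_upwards [nhdsWithin_le_nhds (eventually_abs_sub_lt 0 hε₁), self_mem_nhdsWithin]
          with σ h1 h2
        refine ⟨le_of_lt (by simpa using h1), h2⟩
      filter_upwards [hev] with σ hσ
      obtain ⟨h1, h2⟩ := hσ
      have hσc : (σ:ℂ) ≠ 0 := Complex.ofReal_ne_zero.mpr h2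
      have heq : lam σ / (σ:ℂ)^2 - deriv (deriv lam) 0 / 2
          = (lam σ - deriv (deriv lam) 0 / 2 * (σ:ℂ)^2) / (σ:ℂ)^2 := by
        field_simp
      rw [heq, norm_div]
      have hnorm : ‖(σ:ℂ)^2‖ = |σ|^2 := by
        rw [norm_pow, Complex.norm_real, Real.norm_eq_abs]
      rw [hnorm]
      rw [div_le_iff₀ (by positivity)]
      calc ‖lam σ - deriv (deriv lam) 0 / 2 * (σ:ℂ)^2‖ ≤ M * |σ|^3 := hB0 σ h1
        _ = M * |σ| * |σ|^2 := by ring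
    · have : Filter.Tendsto (fun σ : ℝ => M * |σ|) (nhds 0) (nhds (M * |(0:ℝ)|)) :=
        tendsto_const_nhds.mul (continuous_abs.tendsto 0)
      simpa using this.mono_left nhdsWithin_le_nhds
  have hRtend : Filter.Tendsto
      (fun σ : ℝ => (2*Complex.I*(slope H 0 σ) - K σ)/G σ) (nhdsWithin 0 {(0:ℝ)}ᶜ)
      (nhds (2*Complex.I*IH - K 0)) := by
    have hslopeH : Filter.Tendsto (slope H 0) (nhdsWithin 0 {(0:ℝ)}ᶜ) (nhds IH) :=
      hasDerivAt_iff_tendsto_slope.mp hHder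
    have hKt : Filter.Tendsto K (nhdsWithin 0 {(0:ℝ)}ᶜ) (nhds (K 0)) :=
      hKcont.tendsto.mono_left nhdsWithin_le_nhds
    have hGt : Filter.Tendsto G (nhdsWithin 0 {(0:ℝ)}ᶜ) (nhds 1) := by
      have := hGcont
      rw [ContinuousAt, hG0] at this
      exact this.mono_left nhdsWithin_le_nhds
    have h := (((tendsto_const_nhds (x := (2*Complex.I : ℂ))
        (f := nhdsWithin (0:ℝ) {(0:ℝ)}ᶜ)).mul hslopeH).sub hKt).div hGt one_ne_zero
    simpa [Pi.div_def] using h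
  have heq2 : (fun σ : ℝ => lam σ / (σ:ℂ)^2) =ᶠ[nhdsWithin 0 {(0:ℝ)}ᶜ]
      fun σ : ℝ => (2*Complex.I*(slope H 0 σ) - K σ)/G σ := by
    filter_upwards [nhdsWithin_le_nhds (hS.mem_nhds h0S), nhdsWithin_le_nhds hGne,
      self_mem_nhdsWithin] with σ hσS hGσ hσne
    have hσne' : σ ≠ 0 := hσne
    have hσc : (σ:ℂ) ≠ 0 := Complex.ofReal_ne_zero.mpr hσne'
    have hst := hstar σ hσS
    rw [slope_def_module, hH0, sub_zero, sub_zero]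
    rw [show (σ:ℝ)⁻¹ • H σ = ((σ:ℂ))⁻¹ * H σ by rw [Complex.real_smul, Complex.ofReal_inv]]
    field_simp
    linear_combination hst
  have hcc : deriv (deriv lam) 0 / 2 = 2*Complex.I*IH - K 0 :=
    tendsto_nhds_unique (hLtend.congr' heq2) hRtend
  have part2 : deriv (deriv lam) 0 = 2 * (2 * Complex.I * IH - K 0) := by
    rw [← hcc]; ring
  have part3 : ∃ C > (0:ℝ), ∃ ε > (0:ℝ), ∀ σ : ℝ, |σ| < ε →
      ‖lam σ + (-(2 * Complex.I * IH - K 0)) * σ ^ 2‖ ≤ C * |σ| ^ 3 := by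
    refine ⟨M + 1, by linarith, ε₁, hε₁, fun σ hσ => ?_⟩
    have h := hB0 σ (le_of_lt hσ)
    have heq3 : lam σ + (-(2 * Complex.I * IH - K 0)) * (σ:ℂ) ^ 2
        = lam σ - deriv (deriv lam) 0 / 2 * (σ:ℂ)^2 := by
      rw [part2]; ring
    rw [heq3]
    nlinarith [pow_nonneg (abs_nonneg σ) 3]
  refine ⟨part1, by rw [hItar]; exact part2, ?_⟩
  obtain ⟨C, hC, ε, hε, hb⟩ := part3
  exact ⟨C, hC, ε, hε, fun σ hσ => by rw [hItar]; exact hb σ hσ⟩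
end

section
/- Generalized Young inequality for mixed discrete–continuous convolution: let 1 ≤ q, r ≤ p ≤ ∞ satisfy 1 + 1/p = 1/q + 1/r. Let K : ℤ × [−π,π] → ℝ be measurable with A_∞ := sup_{j∈ℤ} sup_{|y|≤π} |K(j,y)| < ∞ and A₁ := sup_{|y|≤π} Σ_{j∈ℤ} |K(j,y)| < ∞, and let W = (W_k)_{k∈ℤ} with W_k ∈ L^q((−π,π),ℝ) and ‖W‖_{X_q} := (Σ_k ‖W_k‖_{L^q(−π,π)}^q)^{1/q} < ∞ (with the supremum convention when q = ∞). Define (K ⋆ W)_j = Σ_{k∈ℤ} ∫_{−π}^{π} K(j−k, y) W_k(y) dy. Then there is a constant C depending only on p, q, r (one may take C = (2π)^{1−1/q}) such that ‖K ⋆ W‖_{ℓ^p(ℤ)} ≤ C · A_∞^{1/q − 1/p} · A₁^{1/r} · ‖W‖_{X_q}. -/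
open Real MeasureTheory
open scoped ENNReal

/-- The `ℓ^q` norm of an `ℝ≥0∞`-valued sequence (with the supremum convention
at `q = ∞`). -/
noncomputable def lqNormSeq (q : ℝ≥0∞) (a : ℤ → ℝ≥0∞) : ℝ≥0∞ :=
  if q = ∞ then ⨆ j, a j else (∑' j, a j ^ q.toReal) ^ (1 / q.toReal)

/-!
With `f_j(k, y) = |K(j - k, y)|` and `g(k, y) = |W_k(y)|` on `ℤ × (-π, π)` (counting measure times
Lebesgue measure), `|(K ⋆ W)_j| ≤ ∫ f_j g`, and the classical proof of Young's inequality goes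
through. Hölder's inequality with three factors gives
`∫ f_j g ≤ (∫ f_j^r g^q)^(1/p) (∫ f_j^r)^(1 - 1/q) (∫ g^q)^(1 - 1/r)`; the two kernel bounds give
`∑_j f_j^r ≤ A_∞^(r-1) A₁` pointwise and hence `∫ f_j^r ≤ 2π A_∞^(r-1) A₁`, so that summing the
`p`-th powers over `j` yields the bound. At the endpoints `q = ∞` or `r = ∞` one has `p = ∞`, and
the estimate is direct.
-/

theorem lqNormSeq_mono {p : ℝ≥0∞} {a b : ℤ → ℝ≥0∞} (hab : ∀ j, a j ≤ b j) :
    lqNormSeq p a ≤ lqNormSeq p b := by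
  unfold lqNormSeq
  split_ifs
  · exact iSup_mono hab
  · gcongr with j
    exact hab j

theorem lqNormSeq_le_of_le_rpow_mul {p : ℝ≥0∞} (hp : p ≠ 0) {S T : ℤ → ℝ≥0∞} {M c : ℝ≥0∞}
    (hS : ∀ j, S j ≤ T j ^ (1 / p).toReal * c) (hT : ∑' j, T j ≤ M) :
    lqNormSeq p S ≤ M ^ (1 / p).toReal * c := by
  unfold lqNormSeq
  split_ifs with hpT
  · subst hpT
    simpa using iSup_le fun j => by simpa using hS j
  have hp' : 0 < p.toReal := ENNReal.toReal_pos hp hpT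
  rw [ENNReal.toReal_div, ENNReal.toReal_one] at hS ⊢
  have hpow : ∀ x, (x ^ (1 / p.toReal)) ^ p.toReal = x := fun x => by
    rw [← ENNReal.rpow_mul, one_div_mul_cancel hp'.ne', ENNReal.rpow_one]
  calc (∑' j, S j ^ p.toReal) ^ (1 / p.toReal)
      ≤ (∑' j, T j * c ^ p.toReal) ^ (1 / p.toReal) := by
        gcongr with j
        calc S j ^ p.toReal ≤ (T j ^ (1 / p.toReal) * c) ^ p.toReal := by gcongr; exact hS j
          _ = T j * c ^ p.toReal := by rw [ENNReal.mul_rpow_of_nonneg _ _ hp'.le, hpow]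
    _ = (∑' j, T j) ^ (1 / p.toReal) * c := by
        rw [ENNReal.tsum_mul_right, ENNReal.mul_rpow_of_nonneg _ _ (by positivity),
          ← ENNReal.rpow_mul, mul_one_div_cancel hp'.ne', ENNReal.rpow_one]
    _ ≤ M ^ (1 / p.toReal) * c := by gcongr

theorem tsum_rpow_le_rpow_sub_one_mul_tsum {ι : Type*} {x : ι → ℝ≥0∞} {c : ℝ≥0∞} {r : ℝ}
    (hr : 1 ≤ r) (hx : ∀ i, x i ≤ c) : ∑' i, x i ^ r ≤ c ^ (r - 1) * ∑' i, x i := by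
  rw [← ENNReal.tsum_mul_left]
  refine ENNReal.tsum_le_tsum fun i => ?_
  calc x i ^ r = x i ^ (r - 1) * x i := by
        conv_lhs => rw [← sub_add_cancel r 1]
        rw [ENNReal.rpow_add_of_nonneg _ _ (by linarith) zero_le_one, ENNReal.rpow_one]
    _ ≤ c ^ (r - 1) * x i := by gcongr; exact hx i

theorem lintegral_mul_le_holder_young {Z : Type*} [MeasurableSpace Z] {μ : Measure Z}
    {f g : Z → ℝ≥0∞} (hf : AEMeasurable f μ) (hg : AEMeasurable g μ) {q r s : ℝ}
    (hq : 1 ≤ q) (hr : 1 ≤ r) (hs : 0 ≤ s) (hsqr : s + 1 = q⁻¹ + r⁻¹) :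
    ∫⁻ z, f z * g z ∂μ ≤ (∫⁻ z, f z ^ r * g z ^ q ∂μ) ^ s * (∫⁻ z, f z ^ r ∂μ) ^ (1 - q⁻¹)
      * (∫⁻ z, g z ^ q ∂μ) ^ (1 - r⁻¹) := by
  have hq' : q⁻¹ ≤ 1 := inv_le_one_of_one_le₀ hq
  have hr' : r⁻¹ ≤ 1 := inv_le_one_of_one_le₀ hr
  have hexp : ∀ {t u : ℝ}, 1 ≤ t → s + (1 - u) = t⁻¹ → t * s + t * (1 - u) = 1 :=
    fun ht hu => by rw [← mul_add, hu, mul_inv_cancel₀ (by positivity)]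
  have hfg : ∀ z, (f z ^ r * g z ^ q) ^ s * (f z ^ r) ^ (1 - q⁻¹) * (g z ^ q) ^ (1 - r⁻¹)
      = f z * g z := fun z => by
    rw [ENNReal.mul_rpow_of_nonneg _ _ hs, ← ENNReal.rpow_mul, ← ENNReal.rpow_mul,
      ← ENNReal.rpow_mul, ← ENNReal.rpow_mul]
    calc _ = (f z ^ (r * s) * f z ^ (r * (1 - q⁻¹))) * (g z ^ (q * s) * g z ^ (q * (1 - r⁻¹))) := by
          ring
      _ = f z * g z := by
          rw [← ENNReal.rpow_add_of_nonneg _ _ (by positivity) (by nlinarith),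
            ← ENNReal.rpow_add_of_nonneg _ _ (by positivity) (by nlinarith),
            hexp hr (by linarith), hexp hq (by linarith), ENNReal.rpow_one, ENNReal.rpow_one]
  have hHolder := ENNReal.lintegral_prod_norm_pow_le (μ := μ) Finset.univ
    (f := ![fun z => f z ^ r * g z ^ q, fun z => f z ^ r, fun z => g z ^ q])
    (p := ![s, 1 - q⁻¹, 1 - r⁻¹]) ?_ ?_ ?_
  · simpa [Fin.prod_univ_three, hfg] using hHolder
  · intro i _
    fin_cases i
    exacts [(hf.pow_const r).mul (hg.pow_const q), hf.pow_const r, hg.pow_const q]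
  · rw [Fin.sum_univ_three]
    show s + (1 - q⁻¹) + (1 - r⁻¹) = 1
    linarith
  · intro i _
    fin_cases i
    exacts [hs, sub_nonneg.2 hq', sub_nonneg.2 hr']

theorem toReal_one_div_add_one {p q r : ℝ≥0∞} (hq1 : 1 ≤ q) (hr1 : 1 ≤ r)
    (hpqr : 1 + 1 / p = 1 / q + 1 / r) :
    (1 / p).toReal + 1 = (1 / q).toReal + (1 / r).toReal := by
  have hq : 1 / q ≠ ∞ := by simpa using (zero_lt_one.trans_le hq1).ne'
  have hr : 1 / r ≠ ∞ := by simpa using (zero_lt_one.trans_le hr1).ne'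
  have hp : 1 / p ≠ ∞ := ne_top_of_le_ne_top (ENNReal.add_ne_top.2 ⟨hq, hr⟩)
    (le_add_self.trans hpqr.le)
  rw [← ENNReal.toReal_one, ← ENNReal.toReal_add hp ENNReal.one_ne_top, add_comm, hpqr,
    ENNReal.toReal_add hq hr]

theorem young_exponents_of_eq_top {p q r : ℝ≥0∞} (hr1 : 1 ≤ r) (hpqr : 1 + 1 / p = 1 / q + 1 / r)
    (hq : q = ∞) : r = 1 ∧ p = ∞ := by
  subst hq
  simp only [one_div, ENNReal.inv_top, zero_add] at hpqr
  have hp : p⁻¹ = 0 := by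
    have h : 1 + p⁻¹ ≤ 1 + 0 := by rw [hpqr, add_zero]; exact ENNReal.inv_le_one.2 hr1
    exact le_antisymm ((ENNReal.add_le_add_iff_left ENNReal.one_ne_top).1 h) zero_le
  rw [hp, add_zero, eq_comm, ENNReal.inv_eq_one] at hpqr
  exact ⟨hpqr, ENNReal.inv_eq_zero.1 hp⟩

section MixedConvolution

variable {α : Type*} [MeasurableSpace α] {ν : Measure α} {κ a : ℤ → α → ℝ≥0∞} {Ai A : ℝ≥0∞}

noncomputable def mixedConv (ν : Measure α) (κ a : ℤ → α → ℝ≥0∞) (j : ℤ) : ℝ≥0∞ :=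
  ∑' k, ∫⁻ y, κ (j - k) y * a k y ∂ν

theorem tsum_lintegral_sub_le (hκ : ∀ m, Measurable (κ m)) (hA : ∀ᵐ y ∂ν, ∑' m, κ m y ≤ A)
    (j : ℤ) : ∑' k, ∫⁻ y, κ (j - k) y ∂ν ≤ ν Set.univ * A := by
  rw [← lintegral_tsum fun k => (hκ (j - k)).aemeasurable, mul_comm, ← lintegral_const]
  exact lintegral_mono_ae
    (hA.mono fun y hy => ((Equiv.subLeft j).tsum_eq fun m => κ m y).trans_le hy)

theorem tsum_mixedConv_le (hκ : ∀ m, Measurable (κ m)) (ha : ∀ k, AEMeasurable (a k) ν)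
    (hA : ∀ᵐ y ∂ν, ∑' m, κ m y ≤ A) : ∑' j, mixedConv ν κ a j ≤ A * ∑' k, ∫⁻ y, a k y ∂ν := by
  unfold mixedConv
  rw [ENNReal.tsum_comm, ← ENNReal.tsum_mul_left]
  refine ENNReal.tsum_le_tsum fun k => ?_
  rw [← lintegral_tsum (f := fun j y => κ (j - k) y * a k y)
    fun j => (hκ (j - k)).aemeasurable.mul (ha k), ← lintegral_const_mul'' _ (ha k)]
  refine lintegral_mono_ae (hA.mono fun y hy => ?_)
  rw [ENNReal.tsum_mul_right]
  exact mul_le_mul_left (((Equiv.subRight k).tsum_eq fun m => κ m y).trans_le hy) _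

theorem mixedConv_le_of_top (hκ : ∀ m, Measurable (κ m)) (hA : ∀ᵐ y ∂ν, ∑' m, κ m y ≤ A)
    (j : ℤ) : mixedConv ν κ a j ≤ ν Set.univ * A * ⨆ k, eLpNorm (a k) ∞ ν :=
  calc mixedConv ν κ a j ≤ ∑' k, (∫⁻ y, κ (j - k) y ∂ν) * ⨆ k, eLpNorm (a k) ∞ ν := by
        refine ENNReal.tsum_le_tsum fun k => ?_
        rw [← lintegral_mul_const _ (hκ _)]
        refine lintegral_mono_ae ?_
        filter_upwards [enorm_ae_le_eLpNormEssSup (a k) ν] with y hy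
        gcongr
        exact hy.trans (le_iSup_of_le k eLpNorm_exponent_top.ge)
    _ = (∑' k, ∫⁻ y, κ (j - k) y ∂ν) * ⨆ k, eLpNorm (a k) ∞ ν := ENNReal.tsum_mul_right
    _ ≤ ν Set.univ * A * ⨆ k, eLpNorm (a k) ∞ ν := by gcongr; exact tsum_lintegral_sub_le hκ hA j

theorem mixedConv_le_of_one (ha : ∀ k, AEMeasurable (a k) ν) (hAi : ∀ m, ∀ᵐ y ∂ν, κ m y ≤ Ai)
    (j : ℤ) : mixedConv ν κ a j ≤ Ai * ∑' k, eLpNorm (a k) 1 ν := by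
  rw [← ENNReal.tsum_mul_left]
  refine ENNReal.tsum_le_tsum fun k => ?_
  rw [eLpNorm_one_eq_lintegral_enorm, ← lintegral_const_mul'' _ (ha k).enorm]
  exact lintegral_mono_ae ((hAi (j - k)).mono fun y hy => by simp only [enorm_eq_self]; gcongr)

theorem mixedConv_le_holder [SFinite ν] (hκ : ∀ m, Measurable (κ m)) (ha : ∀ k, Measurable (a k))
    {q r s : ℝ} (hq : 1 ≤ q) (hr : 1 ≤ r) (hs : 0 ≤ s) (hsqr : s + 1 = q⁻¹ + r⁻¹) (j : ℤ) :
    mixedConv ν κ a j ≤ mixedConv ν (fun m y => κ m y ^ r) (fun k y => a k y ^ q) j ^ s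
      * (∑' k, ∫⁻ y, κ (j - k) y ^ r ∂ν) ^ (1 - q⁻¹)
      * (∑' k, ∫⁻ y, a k y ^ q ∂ν) ^ (1 - r⁻¹) := by
  set μ : Measure (ℤ × α) := Measure.count.prod ν
  have hμ : ∀ F : ℤ × α → ℝ≥0∞, Measurable F → ∫⁻ z, F z ∂μ = ∑' k, ∫⁻ y, F (k, y) ∂ν :=
    fun F hF => by rw [lintegral_prod _ hF.aemeasurable, lintegral_count]
  have hf : Measurable fun z : ℤ × α => κ (j - z.1) z.2 :=
    measurable_from_prod_countable_right fun k => hκ (j - k)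
  have hg : Measurable fun z : ℤ × α => a z.1 z.2 := measurable_from_prod_countable_right ha
  calc mixedConv ν κ a j = ∫⁻ z, κ (j - z.1) z.2 * a z.1 z.2 ∂μ := (hμ _ (hf.mul hg)).symm
    _ ≤ _ := lintegral_mul_le_holder_young hf.aemeasurable hg.aemeasurable hq hr hs hsqr
    _ = _ := by
        rw [hμ _ (hf.pow_const r), hμ _ (hg.pow_const q),
          hμ (fun z => κ (j - z.1) z.2 ^ r * a z.1 z.2 ^ q) ((hf.pow_const r).mul (hg.pow_const q))]
        rfl

theorem lqNormSeq_eLpNorm_of_ne_top {q : ℝ≥0∞} (hq0 : q ≠ 0) (hqT : q ≠ ∞) :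
    lqNormSeq q (fun k => eLpNorm (a k) q ν) = (∑' k, ∫⁻ y, a k y ^ q.toReal ∂ν) ^ q.toReal⁻¹ := by
  rw [lqNormSeq, if_neg hqT, one_div]
  congr 1
  refine tsum_congr fun k => ?_
  rw [eLpNorm_eq_lintegral_rpow_enorm_toReal hq0 hqT, ← ENNReal.rpow_mul, one_div,
    inv_mul_cancel₀ (ENNReal.toReal_ne_zero.2 ⟨hq0, hqT⟩), ENNReal.rpow_one]
  simp only [enorm_eq_self]

theorem lqNormSeq_mixedConv_le_of_ne_top [SFinite ν] (hκ : ∀ m, Measurable (κ m))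
    (ha : ∀ k, Measurable (a k)) (hAi : ∀ m, ∀ᵐ y ∂ν, κ m y ≤ Ai)
    (hA : ∀ᵐ y ∂ν, ∑' m, κ m y ≤ A) {p q r : ℝ≥0∞} (hq1 : 1 ≤ q) (hr1 : 1 ≤ r) (hqT : q ≠ ∞)
    (hrT : r ≠ ∞) (hqp : q ≤ p) (hpqr : 1 + 1 / p = 1 / q + 1 / r) :
    lqNormSeq p (mixedConv ν κ a) ≤ ν Set.univ ^ (1 - (1 / q).toReal)
      * Ai ^ (1 / q - 1 / p).toReal * A ^ (1 / r).toReal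
      * lqNormSeq q (fun k => eLpNorm (a k) q ν) := by
  have hq0 : q ≠ 0 := (zero_lt_one.trans_le hq1).ne'
  have hexp := toReal_one_div_add_one hq1 hr1 hpqr
  have hdiff : (1 / q - 1 / p).toReal = (1 / q).toReal - (1 / p).toReal :=
    ENNReal.toReal_sub_of_le (ENNReal.div_le_div_left hqp 1) (by simpa using hq0)
  set s := (1 / p).toReal
  set qq := q.toReal
  set rr := r.toReal
  have hq : 1 ≤ qq := ENNReal.toReal_one ▸ ENNReal.toReal_mono hqT hq1
  have hr : 1 ≤ rr := ENNReal.toReal_one ▸ ENNReal.toReal_mono hrT hr1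
  have hq' : 0 ≤ 1 - qq⁻¹ := sub_nonneg.2 (inv_le_one_of_one_le₀ hq)
  have hr' : 0 ≤ 1 - rr⁻¹ := sub_nonneg.2 (inv_le_one_of_one_le₀ hr)
  simp only [one_div, ENNReal.toReal_inv] at hexp hdiff ⊢
  rw [hdiff, lqNormSeq_eLpNorm_of_ne_top hq0 hqT]
  set D := Ai ^ (rr - 1) * A
  have hD : ∀ᵐ y ∂ν, ∑' m, κ m y ^ rr ≤ D := by
    filter_upwards [ae_all_iff.2 hAi, hA] with y hy hsum
    exact (tsum_rpow_le_rpow_sub_one_mul_tsum hr hy).trans (mul_le_mul_right hsum _)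
  set N := ∑' k, ∫⁻ y, a k y ^ qq ∂ν
  have hS : ∀ j, mixedConv ν κ a j
      ≤ mixedConv ν (fun m y => κ m y ^ rr) (fun k y => a k y ^ qq) j ^ s
        * ((ν Set.univ * D) ^ (1 - qq⁻¹) * N ^ (1 - rr⁻¹)) := fun j => by
    refine (mixedConv_le_holder hκ ha hq hr ENNReal.toReal_nonneg hexp j).trans ?_
    rw [← mul_assoc]
    gcongr
    exact tsum_lintegral_sub_le (fun m => (hκ m).pow_const rr) hD j
  have hT := tsum_mixedConv_le (fun m => (hκ m).pow_const rr)
    (fun k => ((ha k).pow_const qq).aemeasurable) hD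
  calc lqNormSeq p (mixedConv ν κ a)
      ≤ (D * N) ^ s * ((ν Set.univ * D) ^ (1 - qq⁻¹) * N ^ (1 - rr⁻¹)) :=
        lqNormSeq_le_of_le_rpow_mul (zero_lt_one.trans_le (hq1.trans hqp)).ne' hS hT
    _ = ν Set.univ ^ (1 - qq⁻¹) * (D ^ s * D ^ (1 - qq⁻¹)) * (N ^ s * N ^ (1 - rr⁻¹)) := by
        rw [ENNReal.mul_rpow_of_nonneg _ _ ENNReal.toReal_nonneg,
          ENNReal.mul_rpow_of_nonneg _ _ hq']
        ring
    _ = ν Set.univ ^ (1 - qq⁻¹) * D ^ rr⁻¹ * N ^ qq⁻¹ := by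
        rw [← ENNReal.rpow_add_of_nonneg _ _ ENNReal.toReal_nonneg hq',
          ← ENNReal.rpow_add_of_nonneg _ _ ENNReal.toReal_nonneg hr',
          show s + (1 - qq⁻¹) = rr⁻¹ by linarith, show s + (1 - rr⁻¹) = qq⁻¹ by linarith]
    _ = _ := by
        rw [ENNReal.mul_rpow_of_nonneg _ _ (by positivity), ← ENNReal.rpow_mul,
          show (rr - 1) * rr⁻¹ = qq⁻¹ - s by
            rw [sub_mul, mul_inv_cancel₀ (by positivity)]; linarith]
        ring

theorem lqNormSeq_mixedConv_le [SFinite ν] (hκ : ∀ m, Measurable (κ m))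
    (ha : ∀ k, AEMeasurable (a k) ν) (hAi : ∀ m, ∀ᵐ y ∂ν, κ m y ≤ Ai)
    (hA : ∀ᵐ y ∂ν, ∑' m, κ m y ≤ A) {p q r : ℝ≥0∞} (hq1 : 1 ≤ q) (hr1 : 1 ≤ r) (hqp : q ≤ p)
    (hpqr : 1 + 1 / p = 1 / q + 1 / r) :
    lqNormSeq p (mixedConv ν κ a) ≤ ν Set.univ ^ (1 - (1 / q).toReal)
      * Ai ^ (1 / q - 1 / p).toReal * A ^ (1 / r).toReal
      * lqNormSeq q (fun k => eLpNorm (a k) q ν) := by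
  wlog ha' : ∀ k, Measurable (a k) generalizing a with H
  · have hconv : mixedConv ν κ a = mixedConv ν κ fun k => (ha k).mk :=
      funext fun j => tsum_congr fun k =>
        lintegral_congr_ae ((ha k).ae_eq_mk.mono fun y hy => congrArg (κ (j - k) y * ·) hy)
    have hnorm : (fun k => eLpNorm (a k) q ν) = fun k => eLpNorm ((ha k).mk) q ν :=
      funext fun k => eLpNorm_congr_ae (ha k).ae_eq_mk
    rw [hconv, hnorm]
    exact H (fun k => (ha k).measurable_mk.aemeasurable) fun k => (ha k).measurable_mk
  by_cases hqT : q = ∞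
  · obtain ⟨rfl, rfl⟩ := young_exponents_of_eq_top hr1 hpqr hqT
    subst hqT
    simpa [lqNormSeq] using mixedConv_le_of_top (a := a) hκ hA
  by_cases hrT : r = ∞
  · obtain ⟨rfl, rfl⟩ := young_exponents_of_eq_top hq1 (hpqr.trans (add_comm _ _)) hrT
    subst hrT
    simpa [lqNormSeq] using mixedConv_le_of_one ha hAi
  exact lqNormSeq_mixedConv_le_of_ne_top hκ ha' hAi hA hq1 hr1 hqT hrT hqp hpqr

end MixedConvolution

theorem generalized_young_mixed_convolution_general
    (p q r : ℝ≥0∞) (hq1 : 1 ≤ q) (hr1 : 1 ≤ r) (hqp : q ≤ p)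
    (hpqr : 1 + 1 / p = 1 / q + 1 / r) :
    ∃ C > (0:ℝ), ∀ (K : ℤ → ℝ → ℝ) (Ainf A1 : ℝ) (W : ℤ → ℝ → ℝ),
      Measurable (Function.uncurry K) →
      (∀ j : ℤ, ∀ y ∈ Set.Icc (-π) π, |K j y| ≤ Ainf) →
      (∀ y ∈ Set.Icc (-π) π,
        Summable (fun j : ℤ => |K j y|) ∧ (∑' j : ℤ, |K j y|) ≤ A1) →
      (∀ k : ℤ, MemLp (W k) q (volume.restrict (Set.Ioo (-π) π))) →
      lqNormSeq q (fun k => eLpNorm (W k) q (volume.restrict (Set.Ioo (-π) π))) < ∞ →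
      lqNormSeq p (fun j =>
          ENNReal.ofReal |∑' k : ℤ, ∫ y in Set.Ioo (-π) π, K (j - k) y * W k y|)
        ≤ ENNReal.ofReal C * ENNReal.ofReal Ainf ^ (1 / q - 1 / p).toReal
            * ENNReal.ofReal A1 ^ (1 / r).toReal
            * lqNormSeq q (fun k => eLpNorm (W k) q (volume.restrict (Set.Ioo (-π) π))) := by
  refine ⟨(2 * π) ^ (1 - (1 / q).toReal), by positivity, ?_⟩
  intro K Ainf A1 W hK hKinf hK1 hW _
  set ν := volume.restrict (Set.Ioo (-π) π)
  have hIcc : ∀ᵐ y ∂ν, y ∈ Set.Icc (-π) π :=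
    (ae_restrict_mem measurableSet_Ioo).mono fun y hy => Set.Ioo_subset_Icc_self hy
  have hAi : ∀ m, ∀ᵐ y ∂ν, ‖K m y‖ₑ ≤ ENNReal.ofReal Ainf := fun m =>
    hIcc.mono fun y hy => by
      rw [Real.enorm_eq_ofReal_abs]; exact ENNReal.ofReal_le_ofReal (hKinf m y hy)
  have hA : ∀ᵐ y ∂ν, ∑' m, ‖K m y‖ₑ ≤ ENNReal.ofReal A1 := hIcc.mono fun y hy => by
    simp_rw [Real.enorm_eq_ofReal_abs]
    rw [← ENNReal.ofReal_tsum_of_nonneg (fun _ => abs_nonneg _) (hK1 y hy).1]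
    exact ENNReal.ofReal_le_ofReal (hK1 y hy).2
  have hν : ν Set.univ = ENNReal.ofReal (2 * π) := by
    rw [Measure.restrict_apply_univ, Real.volume_Ioo]; ring_nf
  calc _ ≤ lqNormSeq p (mixedConv ν (fun m y => ‖K m y‖ₑ) fun k y => ‖W k y‖ₑ) :=
        lqNormSeq_mono fun j => by
          rw [← Real.enorm_eq_ofReal_abs]
          refine enorm_tsum_le_tsum_enorm.trans (ENNReal.tsum_le_tsum fun k => ?_)
          simpa only [enorm_mul] using
            enorm_integral_le_lintegral_enorm (fun y => K (j - k) y * W k y)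
    _ ≤ _ := lqNormSeq_mixedConv_le (fun m => (hK.comp measurable_prodMk_left).enorm)
        (fun k => (hW k).aestronglyMeasurable.enorm) hAi hA hq1 hr1 hqp hpqr
    _ = _ := by
        rw [hν, ENNReal.ofReal_rpow_of_pos (by positivity)]
        simp only [eLpNorm_enorm]

/-- Generalized Young inequality for mixed discrete–continuous
convolution. -/
theorem generalized_young_mixed_convolution
    (p q r : ℝ≥0∞) (hq1 : 1 ≤ q) (hr1 : 1 ≤ r) (hqp : q ≤ p) (hrp : r ≤ p)
    (hpqr : 1 + 1 / p = 1 / q + 1 / r) :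
    ∃ C > (0:ℝ), ∀ (K : ℤ → ℝ → ℝ) (Ainf A1 : ℝ) (W : ℤ → ℝ → ℝ),
      Measurable (Function.uncurry K) →
      (∀ j : ℤ, ∀ y ∈ Set.Icc (-π) π, |K j y| ≤ Ainf) →
      (∀ y ∈ Set.Icc (-π) π,
        Summable (fun j : ℤ => |K j y|) ∧ (∑' j : ℤ, |K j y|) ≤ A1) →
      (∀ k : ℤ, MemLp (W k) q (volume.restrict (Set.Ioo (-π) π))) →
      lqNormSeq q (fun k => eLpNorm (W k) q (volume.restrict (Set.Ioo (-π) π))) < ∞ →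
      lqNormSeq p (fun j =>
          ENNReal.ofReal |∑' k : ℤ, ∫ y in Set.Ioo (-π) π, K (j - k) y * W k y|)
        ≤ ENNReal.ofReal C * ENNReal.ofReal Ainf ^ (1 / q - 1 / p).toReal
            * ENNReal.ofReal A1 ^ (1 / r).toReal
            * lqNormSeq q (fun k => eLpNorm (W k) q (volume.restrict (Set.Ioo (-π) π))) :=
  generalized_young_mixed_convolution_general p q r hq1 hr1 hqp hpqr
end

section
/- Uniform bound for the critical Duhamel integral: sup_{t>0} (1+t) ∫₀ᵗ (1+t−s)^{−1} (t−s)^{−1/2} (1+s)^{−1} ds < ∞. -/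
/-!
Put `w u = u ^ (-1/2) * (1 + u)⁻¹`. Its primitive is `2 * arctan √u`, so `∫₀ᵗ w ≤ π` for
every `t`. For `0 < s < t` the integrand, multiplied by `1 + t`, is at most
`w s + 2 * w (t - s)`: split `1 + t ≤ (1 + s) + (1 + (t - s))`, and bound the cross term
`(t - s) ^ (-1/2) * (1 + s)⁻¹` by `w s` when `s ≤ t - s` and by `w (t - s)` otherwise.
Integrating over `(0, t)` gives the bound `3π`.
-/

open Real Set MeasureTheory intervalIntegral

lemma intervalIntegral.integral_mono_on_Ioo_of_nonneg {μ : Measure ℝ} [NullSingletonClass μ]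
    {f g : ℝ → ℝ} {a b : ℝ} (hab : a ≤ b) (hg : IntervalIntegrable g μ a b)
    (hf : ∀ x ∈ Ioo a b, 0 ≤ f x) (h : ∀ x ∈ Ioo a b, f x ≤ g x) :
    ∫ x in a..b, f x ∂μ ≤ ∫ x in a..b, g x ∂μ := by
  simp only [integral_of_le hab, integral_Ioc_eq_integral_Ioo]
  exact integral_mono_of_nonneg (ae_restrict_of_forall_mem measurableSet_Ioo hf)
    (hg.1.mono_set Ioo_subset_Ioc_self) (ae_restrict_of_forall_mem measurableSet_Ioo h)

noncomputable def invSqrtWeight (u : ℝ) : ℝ := u ^ (-(1/2 : ℝ)) * (1 + u)⁻¹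

lemma invSqrtWeight_nonneg {u : ℝ} (hu : 0 ≤ u) : 0 ≤ invSqrtWeight u :=
  mul_nonneg (rpow_nonneg hu _) (inv_nonneg.2 (by linarith))

lemma continuous_two_mul_arctan_sqrt : Continuous fun x => 2 * arctan √x := by fun_prop

lemma hasDerivAt_two_mul_arctan_sqrt {u : ℝ} (hu : 0 < u) :
    HasDerivAt (fun x => 2 * arctan √x) (invSqrtWeight u) u := by
  refine (((hasDerivAt_arctan √u).comp u (hasDerivAt_sqrt hu.ne')).const_mul 2).congr_deriv ?_
  rw [invSqrtWeight, sq_sqrt hu.le, rpow_neg hu.le, ← sqrt_eq_rpow]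
  field_simp

lemma intervalIntegrable_invSqrtWeight {t : ℝ} (ht : 0 ≤ t) :
    IntervalIntegrable invSqrtWeight volume 0 t :=
  (intervalIntegrable_iff_integrableOn_Ioc_of_le ht).2 <|
    integrableOn_deriv_of_nonneg continuous_two_mul_arctan_sqrt.continuousOn
      (fun _ hu => hasDerivAt_two_mul_arctan_sqrt hu.1) (fun _ hu => invSqrtWeight_nonneg hu.1.le)

lemma integral_invSqrtWeight {t : ℝ} (ht : 0 ≤ t) :
    ∫ u in 0..t, invSqrtWeight u = 2 * arctan √t := by
  rw [integral_eq_sub_of_hasDerivAt_of_le ht continuous_two_mul_arctan_sqrt.continuousOn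
    (fun _ hu => hasDerivAt_two_mul_arctan_sqrt hu.1) (intervalIntegrable_invSqrtWeight ht)]
  simp

lemma integral_invSqrtWeight_le_pi {t : ℝ} (ht : 0 ≤ t) :
    ∫ u in 0..t, invSqrtWeight u ≤ π := by
  rw [integral_invSqrtWeight ht]
  linarith [arctan_lt_pi_div_two √t]

lemma rpow_neg_half_mul_inv_one_add_le {a s : ℝ} (ha : 0 < a) (hs : 0 < s) :
    a ^ (-(1/2 : ℝ)) * (1 + s)⁻¹ ≤ invSqrtWeight s + invSqrtWeight a := by
  rcases le_total s a with hsa | has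
  · refine le_add_of_le_of_nonneg ?_ (invSqrtWeight_nonneg ha.le)
    exact mul_le_mul_of_nonneg_right (rpow_le_rpow_of_nonpos hs hsa (by norm_num)) (by positivity)
  · refine le_add_of_nonneg_of_le (invSqrtWeight_nonneg hs.le) ?_
    exact mul_le_mul_of_nonneg_left (inv_anti₀ (by linarith) (by linarith)) (rpow_nonneg ha.le _)

noncomputable def duhamelIntegrand (t s : ℝ) : ℝ :=
  (1 + t - s)⁻¹ * (t - s) ^ (-(1/2 : ℝ)) * (1 + s)⁻¹

lemma duhamelIntegrand_nonneg {s t : ℝ} (hst : s ≤ t) (hs : -1 < s) :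
    0 ≤ duhamelIntegrand t s := by
  have := rpow_nonneg (sub_nonneg.2 hst) (-(1/2 : ℝ))
  have : 0 < 1 + t - s := by linarith
  have : 0 < 1 + s := by linarith
  unfold duhamelIntegrand
  positivity

lemma one_add_mul_duhamelIntegrand_le {s t : ℝ} (hs : 0 < s) (hst : s < t) :
    (1 + t) * duhamelIntegrand t s ≤ invSqrtWeight s + 2 * invSqrtWeight (t - s) := by
  have hts : 0 < t - s := sub_pos.2 hst
  have hsplit : (1 + t) * duhamelIntegrand t s ≤
      (t - s) ^ (-(1/2 : ℝ)) * (1 + s)⁻¹ + invSqrtWeight (t - s) :=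
    calc (1 + t) * duhamelIntegrand t s
        ≤ ((1 + s) + (1 + (t - s))) * duhamelIntegrand t s :=
          mul_le_mul_of_nonneg_right (by linarith) (duhamelIntegrand_nonneg hst.le (by linarith))
      _ = (t - s) ^ (-(1/2 : ℝ)) * (1 + s)⁻¹ + invSqrtWeight (t - s) := by
          rw [duhamelIntegrand, invSqrtWeight, show 1 + t - s = 1 + (t - s) by ring]
          field_simp
          ring
  linarith [rpow_neg_half_mul_inv_one_add_le hts hs]

/-- Uniform bound for the critical Duhamel integral. -/
theorem uniform_bound_critical_duhamel_integral :
    ∃ C : ℝ, ∀ t : ℝ, 0 < t →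
      (1 + t) * (∫ s in (0:ℝ)..t, (1 + t - s)⁻¹ * (t - s) ^ (-(1/2 : ℝ)) * (1 + s)⁻¹) ≤ C := by
  refine ⟨3 * π, fun t ht => ?_⟩
  have hw := intervalIntegrable_invSqrtWeight ht.le
  have hw_refl : IntervalIntegrable (fun s => invSqrtWeight (t - s)) volume 0 t := by
    simpa using (hw.comp_sub_left t).symm
  have integral_refl : ∫ s in 0..t, invSqrtWeight (t - s) = ∫ s in 0..t, invSqrtWeight s := by
    simp only [integral_comp_sub_left, sub_self, sub_zero]
  calc (1 + t) * ∫ s in 0..t, duhamelIntegrand t s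
      = ∫ s in 0..t, (1 + t) * duhamelIntegrand t s :=
        (intervalIntegral.integral_const_mul _ _).symm
    _ ≤ ∫ s in 0..t, (invSqrtWeight s + 2 * invSqrtWeight (t - s)) :=
        integral_mono_on_Ioo_of_nonneg ht.le (hw.add (hw_refl.const_mul 2))
          (fun s hs => mul_nonneg (by linarith)
            (duhamelIntegrand_nonneg hs.2.le (by linarith [hs.1])))
          fun s hs => one_add_mul_duhamelIntegrand_le hs.1 hs.2
    _ = 3 * ∫ s in 0..t, invSqrtWeight s := by
        rw [integral_add hw (hw_refl.const_mul 2), intervalIntegral.integral_const_mul,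
          integral_refl]
        ring
    _ ≤ 3 * π := by linarith [integral_invSqrtWeight_le_pi ht.le]
end
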